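/- arXiv:2011.09948 — 4 statements merged into one kernel-verified Lean document; each statement's English description precedes it below -/
import Mathlib

section
/- Let m be fixed with ℙ(α_m ∈ [d/(d+1),1)) > 0 and 𝔼α_m < 1, and assume 𝔼ξ = 0, 𝔼‖ξ‖² < ∞ and that the matrix 𝔼ξξᵀ has full rank. For any c > 1, if 𝔼α_m^c < 1 and 𝔼‖ξ‖^c < ∞, then 𝔼‖Y^{(m)}‖^c < ∞, where Y^{(m)} is a random vector with the stationary distribution of the restarted chain. -/
open MeasureTheory ProbabilityTheory Filter Set
open scoped ENNReal NNReal Topology Pointwise RealInnerProductSpace Classical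

noncomputable section

private lemma abs_min_le' {v t : ℝ} (hv : 0 ≤ v) : |min v t| ≤ |t| := by
  rcases le_total v t with h | h
  · rw [min_eq_left h, abs_of_nonneg hv]
    exact h.trans (le_abs_self t)
  · rw [min_eq_right h]

private lemma integrable_of_abs_bound {Ω : Type*} [MeasurableSpace Ω] {P : Measure Ω}
    [IsFiniteMeasure P] {g : Ω → ℝ} (hm : AEStronglyMeasurable g P) (C : ℝ)
    (h : ∀ ω, |g ω| ≤ C) : Integrable g P :=
  (integrable_const C).mono' hm (ae_of_all _ (by simpa [Real.norm_eq_abs] using h))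

private lemma convex_rpow_bound {c : ℝ} (hc : 1 ≤ c) {l : ℝ} (hl0 : 0 < l) (hl1 : l < 1)
    {u v : ℝ} (hu : 0 ≤ u) (hv : 0 ≤ v) :
    (u + v) ^ c ≤ l ^ (1 - c) * u ^ c + (1 - l) ^ (1 - c) * v ^ c := by
  have h1l : (0:ℝ) < 1 - l := by linarith
  have key := Real.rpow_arith_mean_le_arith_mean_rpow Finset.univ ![l, 1 - l]
      ![u / l, v / (1 - l)] (by
        intro i _
        fin_cases i <;> simp <;> linarith) (by simp [Fin.sum_univ_two]) (by
        intro i _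
        fin_cases i <;> simp <;> positivity) hc
  simp only [Fin.sum_univ_two, Matrix.cons_val_zero, Matrix.cons_val_one, Matrix.head_cons] at key
  rw [mul_div_cancel₀ _ hl0.ne', mul_div_cancel₀ _ h1l.ne'] at key
  have e1 : l * (u / l) ^ c = l ^ (1 - c) * u ^ c := by
    rw [Real.div_rpow hu hl0.le, Real.rpow_sub hl0, Real.rpow_one]
    field_simp
  have e2 : (1 - l) * (v / (1 - l)) ^ c = (1 - l) ^ (1 - c) * v ^ c := by
    rw [Real.div_rpow hv h1l.le, Real.rpow_sub h1l, Real.rpow_one]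
    field_simp
  rw [e1, e2] at key
  exact key

/-- abstract iteration lemma for truncated moments -/
private lemma trunc_iteration {f : ℝ → ℝ} {lam b : ℝ} (hlam0 : 0 < lam) (hlam1 : lam < 1)
    (hb : 0 ≤ b) (hfle : ∀ t, f t ≤ t)
    (hkey : ∀ M, f M ≤ b + lam * f ((M - b) / lam))
    (hcut : ∀ δ > (0:ℝ), ∃ T ≥ (0:ℝ), ∃ p ≥ (0:ℝ), p ≤ δ ∧ ∀ t, f t ≤ T + t * p) :
    ∀ M, f M ≤ b / (1 - lam) := by
  set B := b / (1 - lam) with hBdef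
  have h1lam : (0:ℝ) < 1 - lam := by linarith
  have hB0 : 0 ≤ B := div_nonneg hb h1lam.le
  have hbB : b = (1 - lam) * B := by rw [hBdef, mul_div_cancel₀ _ h1lam.ne']
  intro M
  rcases le_or_gt M B with hMB | hMB
  · exact (hfle M).trans hMB
  have hM0 : 0 < M := lt_of_le_of_lt hB0 hMB
  have hiter : ∀ k : ℕ, f M ≤ (1 - lam ^ k) * B + lam ^ k * f (B + (M - B) / lam ^ k) := by
    intro k
    induction k with
    | zero => simp
    | succ k ih =>
      have hlk : (0:ℝ) < lam ^ k := pow_pos hlam0 k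
      have hstep := hkey (B + (M - B) / lam ^ k)
      have harg : (B + (M - B) / lam ^ k - b) / lam = B + (M - B) / lam ^ (k + 1) := by
        rw [hbB]
        field_simp
        ring
      rw [harg] at hstep
      have hmul := mul_le_mul_of_nonneg_left hstep hlk.le
      have hexp : lam ^ k * (b + lam * f (B + (M - B) / lam ^ (k + 1)))
          = (lam ^ k - lam ^ (k + 1)) * B + lam ^ (k + 1) * f (B + (M - B) / lam ^ (k + 1)) := by
        rw [hbB, pow_succ]
        ring
      rw [hexp] at hmul
      linarith
  refine le_of_forall_pos_le_add fun ε hε => ?_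
  obtain ⟨T, hT0, p, hp0, hpδ, hcutp⟩ := hcut (ε / (2 * M)) (by positivity)
  have hMp : M * p ≤ ε / 2 := by
    calc M * p ≤ M * (ε / (2 * M)) := by nlinarith
    _ = ε / 2 := by field_simp
  obtain ⟨k, hk⟩ := exists_pow_lt_of_lt_one (x := ε / (2 * (T + 1))) (by positivity) hlam1
  have hlk0 : (0:ℝ) < lam ^ k := pow_pos hlam0 k
  have hlk1 : lam ^ k ≤ 1 := pow_le_one₀ hlam0.le hlam1.le
  have hN := hcutp (B + (M - B) / lam ^ k)
  have h1 : lam ^ k * f (B + (M - B) / lam ^ k) ≤ lam ^ k * T + (lam ^ k * B + (M - B)) * p := by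
    have := mul_le_mul_of_nonneg_left hN hlk0.le
    have harg : lam ^ k * (B + (M - B) / lam ^ k) = lam ^ k * B + (M - B) := by
      field_simp
    nlinarith
  have h2 : (lam ^ k * B + (M - B)) * p ≤ M * p := by
    have : lam ^ k * B ≤ B := by nlinarith
    nlinarith
  have h3 : lam ^ k * T ≤ ε / 2 := by
    have : lam ^ k * (T + 1) ≤ (ε / (2 * (T + 1))) * (T + 1) := by nlinarith
    have h4 : (ε / (2 * (T + 1))) * (T + 1) = ε / 2 := by field_simp
    nlinarith
  have := hiter k
  nlinarith [hB0, hlk1, hlk0.le]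

/-- Proposition 1 (iii): for `c > 1`, if `𝔼 α_m^c < 1` and `𝔼‖ξ‖^c < ∞`,
then the stationary vector `Y^{(m)}` of the restarted chain (characterized by the
distributional fixed-point equation `Y =_d α Y 𝟙{Y ∉ γ A} + β ξ` with `α, Y, ξ`
independent) satisfies `𝔼‖Y^{(m)}‖^c < ∞`. -/
theorem statement2
    {Ω : Type*} [MeasurableSpace Ω] (P : Measure Ω) [IsProbabilityMeasure P]
    (d : ℕ) (hd : 0 < d)
    (α : Ω → ℝ) (β : ℝ) (hβ : 0 < β)
    (ξ Y : Ω → EuclideanSpace ℝ (Fin d))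
    (hαmeas : Measurable α) (hξmeas : Measurable ξ) (hYmeas : Measurable Y)
    (hαpos : ∀ᵐ ω ∂P, 0 < α ω)
    (A : Set (EuclideanSpace ℝ (Fin d))) (hA : MeasurableSet A)
    (r₁ r₂ : ℝ) (hr₁ : 0 < r₁) (hr₁₂ : r₁ ≤ r₂)
    (hAsub : Metric.ball (0 : EuclideanSpace ℝ (Fin d)) r₁ ⊆ A)
    (hAsup : A ⊆ Metric.ball (0 : EuclideanSpace ℝ (Fin d)) r₂)
    (γ : ℝ) (hγ : 0 < γ)
    -- ℙ(α_m ∈ [d/(d+1), 1)) > 0 and 𝔼α_m < 1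
    (hαint : Integrable α P)
    (hαIco : 0 < P {ω | α ω ∈ Set.Ico ((d : ℝ) / ((d : ℝ) + 1)) 1})
    (hαmean : ∫ ω, α ω ∂P < 1)
    -- 𝔼ξ = 0, 𝔼‖ξ‖² < ∞ and 𝔼ξξᵀ of full rank
    (hξint : Integrable ξ P) (hξmean : ∫ ω, ξ ω ∂P = 0)
    (hξsq : Integrable (fun ω => ‖ξ ω‖ ^ 2) P)
    (hfullrank : (Matrix.of fun i j : Fin d => ∫ ω, ξ ω i * ξ ω j ∂P).det ≠ 0)
    -- Y has the stationary distribution: α, Y, ξ independent and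
    -- Y =_d α Y 𝟙{Y ∉ γ A} + β ξ
    (hindep₁ : IndepFun α Y P)
    (hindep₂ : IndepFun (fun ω => (α ω, Y ω)) ξ P)
    (hfix : IdentDistrib Y
      (fun ω => (if Y ω ∈ γ • A then 0 else α ω • Y ω) + β • ξ ω) P P)
    -- the hypotheses of part (iii)
    (c : ℝ) (hc : 1 < c)
    (hαc : Integrable (fun ω => α ω ^ c) P)
    (hαclt : ∫ ω, α ω ^ c ∂P < 1)
    (hξc : Integrable (fun ω => ‖ξ ω‖ ^ c) P) :
    Integrable (fun ω => ‖Y ω‖ ^ c) P := by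
  have hc0 : (0:ℝ) < c := lt_trans one_pos hc
  have hVmeas : Measurable fun ω => ‖Y ω‖ ^ c :=
    (Real.continuous_rpow_const hc0.le).measurable.comp hYmeas.norm
  have hV0 : ∀ ω, 0 ≤ ‖Y ω‖ ^ c := fun ω => Real.rpow_nonneg (norm_nonneg _) c
  set ρ := ∫ ω, α ω ^ c ∂P with hρdef
  have hρ0 : 0 ≤ ρ :=
    integral_nonneg_of_ae (hαpos.mono fun ω h => Real.rpow_nonneg h.le c)
  -- choose `l ∈ (0,1)` with `l ^ (1-c) * ρ < 1`
  obtain ⟨l, hlρ, hl0, hl1⟩ :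
      ∃ l : ℝ, l ^ (1 - c) * ρ < 1 ∧ 0 < l ∧ l < 1 := by
    have hcont : ContinuousAt (fun t : ℝ => t ^ (1 - c) * ρ) 1 :=
      (Real.continuousAt_rpow_const 1 (1 - c) (Or.inl one_ne_zero)).mul continuousAt_const
    have htend : Tendsto (fun t : ℝ => t ^ (1 - c) * ρ) (𝓝[<] (1:ℝ)) (𝓝 ρ) := by
      have := hcont.continuousWithinAt (s := Iio (1:ℝ))
      simpa [ContinuousWithinAt, Real.one_rpow] using this
    have h01 : ∀ᶠ t in 𝓝[<] (1:ℝ), 0 < t :=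
      eventually_nhdsWithin_of_eventually_nhds (eventually_gt_nhds one_pos)
    have h2 : ∀ᶠ t in 𝓝[<] (1:ℝ), t < 1 := eventually_mem_nhdsWithin.mono fun t ht => ht
    obtain ⟨l, h⟩ := (((htend.eventually_lt_const hαclt).and h01).and h2).exists
    exact ⟨l, h.1.1, h.1.2, h.2⟩
  set lam := max (l ^ (1 - c) * ρ) (1/2) with hlamdef
  have hlam0 : (0:ℝ) < lam := lt_of_lt_of_le one_half_pos (le_max_right _ _)
  have hlam1 : lam < 1 := max_lt hlρ (by norm_num)
  have hκρlam : l ^ (1 - c) * ρ ≤ lam := le_max_left _ _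
  set κ₂ := (1 - l) ^ (1 - c) with hκ₂def
  have hκ₂0 : 0 ≤ κ₂ := Real.rpow_nonneg (by linarith) _
  set Eξc := ∫ ω, ‖ξ ω‖ ^ c ∂P with hEξdef
  have hEξ0 : 0 ≤ Eξc := integral_nonneg fun ω => Real.rpow_nonneg (norm_nonneg _) c
  have hβc0 : 0 ≤ β ^ c := Real.rpow_nonneg hβ.le c
  set b := κ₂ * β ^ c * Eξc with hbdef
  have hb0 : 0 ≤ b := mul_nonneg (mul_nonneg hκ₂0 hβc0) hEξ0
  -- measures and independence
  have hWmeas : Measurable fun ω => (α ω, ξ ω) := hαmeas.prodMk hξmeas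
  set μy := P.map Y with hμydef
  set μw := P.map (fun ω => (α ω, ξ ω)) with hμwdef
  haveI : IsProbabilityMeasure μy := Measure.isProbabilityMeasure_map hYmeas.aemeasurable
  haveI : IsProbabilityMeasure μw := Measure.isProbabilityMeasure_map hWmeas.aemeasurable
  haveI : IsProbabilityMeasure (P.map α) := Measure.isProbabilityMeasure_map hαmeas.aemeasurable
  haveI : IsProbabilityMeasure (P.map ξ) := Measure.isProbabilityMeasure_map hξmeas.aemeasurable
  haveI : IsProbabilityMeasure (P.map Y) := Measure.isProbabilityMeasure_map hYmeas.aemeasurable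
  have hm1 : P.map (fun ω => (α ω, Y ω)) = (P.map α).prod (P.map Y) :=
    (indepFun_iff_map_prod_eq_prod_map_map hαmeas.aemeasurable hYmeas.aemeasurable).mp hindep₁
  have hm2 : P.map (fun ω => ((α ω, Y ω), ξ ω)) = ((P.map α).prod (P.map Y)).prod (P.map ξ) := by
    rw [← hm1]
    exact (indepFun_iff_map_prod_eq_prod_map_map (hαmeas.prodMk hYmeas).aemeasurable
      hξmeas.aemeasurable).mp hindep₂
  have hindepαξ : IndepFun α ξ P := hindep₂.comp measurable_fst measurable_id
  have hmw : μw = (P.map α).prod (P.map ξ) :=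
    (indepFun_iff_map_prod_eq_prod_map_map hαmeas.aemeasurable hξmeas.aemeasurable).mp hindepαξ
  have hφpres : MeasurePreserving
      (fun q : (ℝ × EuclideanSpace ℝ (Fin d)) × EuclideanSpace ℝ (Fin d) =>
        (q.1.2, (q.1.1, q.2)))
      (((P.map α).prod (P.map Y)).prod (P.map ξ))
      ((P.map Y).prod ((P.map α).prod (P.map ξ))) := by
    have h1 : MeasurePreserving
        (Prod.map (Prod.swap : ℝ × EuclideanSpace ℝ (Fin d) → _)
          (id : EuclideanSpace ℝ (Fin d) → EuclideanSpace ℝ (Fin d)))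
        (((P.map α).prod (P.map Y)).prod (P.map ξ))
        (((P.map Y).prod (P.map α)).prod (P.map ξ)) :=
      ((Measure.measurePreserving_swap :
        MeasurePreserving Prod.swap ((P.map α).prod (P.map Y)) ((P.map Y).prod (P.map α)))).prod
        (MeasurePreserving.id _)
    have h2 := measurePreserving_prodAssoc (P.map Y) (P.map α) (P.map ξ)
    exact h2.comp h1
  have hmap : P.map (fun ω => (Y ω, (α ω, ξ ω))) = μy.prod μw := by
    have hcomp : (fun ω => (Y ω, (α ω, ξ ω))) =
        (fun q : (ℝ × EuclideanSpace ℝ (Fin d)) × EuclideanSpace ℝ (Fin d) =>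
          (q.1.2, (q.1.1, q.2))) ∘ (fun ω => ((α ω, Y ω), ξ ω)) := rfl
    rw [hmw, hμydef, hcomp,
      ← Measure.map_map hφpres.measurable ((hαmeas.prodMk hYmeas).prodMk hξmeas), hm2,
      hφpres.map_eq]
  -- the truncated moment function
  set f : ℝ → ℝ := fun t => ∫ ω, min (‖Y ω‖ ^ c) t ∂P with hfdef
  have hfInt : ∀ t : ℝ, Integrable (fun ω => min (‖Y ω‖ ^ c) t) P := fun t =>
    integrable_of_abs_bound (hVmeas.min measurable_const).aestronglyMeasurable |t|
      (fun ω => abs_min_le' (hV0 ω))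
  have hfle : ∀ t, f t ≤ t := by
    intro t
    calc f t ≤ ∫ _, t ∂P :=
          integral_mono (hfInt t) (integrable_const t) fun ω => min_le_right _ _
    _ = t := by simp
  -- the key one-step recursion
  have hkey : ∀ M : ℝ, f M ≤ b + lam * f ((M - b) / lam) := by
    intro M
    set F : EuclideanSpace ℝ (Fin d) × (ℝ × EuclideanSpace ℝ (Fin d)) → ℝ :=
      fun q => min ((max q.2.1 0 * ‖q.1‖ + β * ‖q.2.2‖) ^ c) M with hFdef
    have hFcont : Continuous F := by
      refine Continuous.min ?_ continuous_const
      exact (Real.continuous_rpow_const hc0.le).comp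
        (((continuous_snd.fst.max continuous_const).mul continuous_fst.norm).add
          (continuous_const.mul continuous_snd.snd.norm))
    have hFbase0 : ∀ q : EuclideanSpace ℝ (Fin d) × (ℝ × EuclideanSpace ℝ (Fin d)),
        0 ≤ max q.2.1 0 * ‖q.1‖ + β * ‖q.2.2‖ := fun q =>
      add_nonneg (mul_nonneg (le_max_right _ _) (norm_nonneg _))
        (mul_nonneg hβ.le (norm_nonneg _))
    have hFabs : ∀ q, |F q| ≤ |M| := fun q => abs_min_le' (Real.rpow_nonneg (hFbase0 q) c)
    have hgm : Measurable fun v : EuclideanSpace ℝ (Fin d) => min (‖v‖ ^ c) M :=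
      (((Real.continuous_rpow_const hc0.le).comp continuous_norm).min continuous_const).measurable
    have hA' : f M = ∫ ω, min (‖(if Y ω ∈ γ • A then 0 else α ω • Y ω) + β • ξ ω‖ ^ c) M ∂P :=
      (hfix.comp hgm).integral_eq
    have hZm : AEStronglyMeasurable
        (fun ω => min (‖(if Y ω ∈ γ • A then 0 else α ω • Y ω) + β • ξ ω‖ ^ c) M) P :=
      ((hfix.comp hgm).aemeasurable_snd).aestronglyMeasurable
    have hB' : ∫ ω, min (‖(if Y ω ∈ γ • A then 0 else α ω • Y ω) + β • ξ ω‖ ^ c) M ∂P ≤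
        ∫ ω, F (Y ω, (α ω, ξ ω)) ∂P := by
      refine integral_mono_ae
        (integrable_of_abs_bound hZm |M| fun ω => abs_min_le' (Real.rpow_nonneg (norm_nonneg _) c))
        (integrable_of_abs_bound
          ((hFcont.measurable.comp (hYmeas.prodMk hWmeas)).aestronglyMeasurable) |M|
          fun ω => hFabs _) ?_
      filter_upwards [hαpos] with ω hω
      have hnorm : ‖(if Y ω ∈ γ • A then 0 else α ω • Y ω) + β • ξ ω‖ ≤
          max (α ω) 0 * ‖Y ω‖ + β * ‖ξ ω‖ := by
        refine (norm_add_le _ _).trans (add_le_add ?_ ?_)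
        · split_ifs
          · simpa using mul_nonneg (le_max_right (α ω) 0) (norm_nonneg (Y ω))
          · rw [norm_smul, Real.norm_eq_abs, abs_of_pos hω, max_eq_left hω.le]
        · rw [norm_smul, Real.norm_eq_abs, abs_of_pos hβ]
      exact min_le_min (Real.rpow_le_rpow (norm_nonneg _) hnorm hc0.le) le_rfl
    have hFint : Integrable F (μy.prod μw) :=
      integrable_of_abs_bound hFcont.measurable.aestronglyMeasurable |M| hFabs
    have hC' : ∫ ω, F (Y ω, (α ω, ξ ω)) ∂P = ∫ y, ∫ p, F (y, p) ∂μw ∂μy := by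
      rw [← integral_map (hYmeas.prodMk hWmeas).aemeasurable
        hFcont.measurable.aestronglyMeasurable, hmap]
      exact integral_prod F hFint
    -- integrals over μw
    have hcontα : Continuous fun p : ℝ × EuclideanSpace ℝ (Fin d) => max p.1 0 ^ c :=
      (Real.continuous_rpow_const hc0.le).comp (continuous_fst.max continuous_const)
    have hcontξ : Continuous fun p : ℝ × EuclideanSpace ℝ (Fin d) => ‖p.2‖ ^ c :=
      (Real.continuous_rpow_const hc0.le).comp continuous_snd.norm
    have hαae : (fun ω => α ω ^ c) =ᵐ[P] fun ω => max (α ω) 0 ^ c :=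
      hαpos.mono fun ω h => by simp [max_eq_left h.le]
    have hIntαw : Integrable (fun p : ℝ × EuclideanSpace ℝ (Fin d) => max p.1 0 ^ c) μw := by
      rw [hμwdef, integrable_map_measure hcontα.measurable.aestronglyMeasurable
        hWmeas.aemeasurable]
      exact hαc.congr hαae
    have hIntξw : Integrable (fun p : ℝ × EuclideanSpace ℝ (Fin d) => ‖p.2‖ ^ c) μw := by
      rw [hμwdef, integrable_map_measure hcontξ.measurable.aestronglyMeasurable
        hWmeas.aemeasurable]
      exact hξc
    have hIαw : ∫ p, max p.1 0 ^ c ∂μw = ρ := by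
      rw [hμwdef, integral_map hWmeas.aemeasurable hcontα.measurable.aestronglyMeasurable, hρdef]
      exact (integral_congr_ae hαae).symm
    have hIξw : ∫ p, ‖p.2‖ ^ c ∂μw = Eξc := by
      rw [hμwdef, integral_map hWmeas.aemeasurable hcontξ.measurable.aestronglyMeasurable, hEξdef]
    have hD' : ∀ y : EuclideanSpace ℝ (Fin d),
        ∫ p, F (y, p) ∂μw ≤ min (lam * ‖y‖ ^ c + b) M := by
      intro y
      have hyc0 : 0 ≤ ‖y‖ ^ c := Real.rpow_nonneg (norm_nonneg _) c
      have hFyInt : Integrable (fun p => F (y, p)) μw :=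
        integrable_of_abs_bound
          ((hFcont.comp (continuous_const.prodMk continuous_id)).measurable.aestronglyMeasurable)
          |M| fun p => hFabs _
      rw [min_comm]
      refine le_min ?_ ?_
      · calc ∫ p, F (y, p) ∂μw ≤ ∫ _, M ∂μw :=
              integral_mono hFyInt (integrable_const M) fun p => min_le_right _ _
        _ = M := by simp
      · have hptw : ∀ p : ℝ × EuclideanSpace ℝ (Fin d), F (y, p) ≤
            l ^ (1 - c) * ‖y‖ ^ c * max p.1 0 ^ c + κ₂ * β ^ c * ‖p.2‖ ^ c := by
          intro p
          refine (min_le_left _ _).trans ?_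
          have hcv := convex_rpow_bound hc.le hl0 hl1
            (mul_nonneg (le_max_right p.1 0) (norm_nonneg y))
            (mul_nonneg hβ.le (norm_nonneg p.2))
          refine hcv.trans (le_of_eq ?_)
          rw [Real.mul_rpow (le_max_right p.1 0) (norm_nonneg y),
            Real.mul_rpow hβ.le (norm_nonneg p.2), hκ₂def]
          ring
        have hG : Integrable (fun p : ℝ × EuclideanSpace ℝ (Fin d) =>
            l ^ (1 - c) * ‖y‖ ^ c * max p.1 0 ^ c + κ₂ * β ^ c * ‖p.2‖ ^ c) μw :=
          (hIntαw.const_mul _).add (hIntξw.const_mul _)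
        calc ∫ p, F (y, p) ∂μw
            ≤ ∫ p, (l ^ (1 - c) * ‖y‖ ^ c * max p.1 0 ^ c + κ₂ * β ^ c * ‖p.2‖ ^ c) ∂μw :=
              integral_mono hFyInt hG hptw
          _ = l ^ (1 - c) * ‖y‖ ^ c * ρ + κ₂ * β ^ c * Eξc := by
              rw [integral_add (hIntαw.const_mul _) (hIntξw.const_mul _),
                integral_const_mul, integral_const_mul, hIαw, hIξw]
          _ ≤ lam * ‖y‖ ^ c + b := by
              have hmul := mul_le_mul_of_nonneg_right hκρlam hyc0
              rw [hbdef]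
              nlinarith
    have hcontmin : Continuous fun y : EuclideanSpace ℝ (Fin d) =>
        min (lam * ‖y‖ ^ c + b) M :=
      (((continuous_const.mul ((Real.continuous_rpow_const hc0.le).comp
        continuous_norm)).add continuous_const).min continuous_const)
    have hminInt : Integrable (fun y : EuclideanSpace ℝ (Fin d) =>
        min (lam * ‖y‖ ^ c + b) M) μy :=
      integrable_of_abs_bound hcontmin.measurable.aestronglyMeasurable |M|
        (fun y => abs_min_le' (by positivity))
    have hE1 : ∫ y, ∫ p, F (y, p) ∂μw ∂μy ≤ ∫ y, min (lam * ‖y‖ ^ c + b) M ∂μy :=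
      integral_mono hFint.integral_prod_left hminInt hD'
    have hE2 : ∫ y, min (lam * ‖y‖ ^ c + b) M ∂μy
        = ∫ ω, min (lam * ‖Y ω‖ ^ c + b) M ∂P := by
      rw [hμydef, integral_map hYmeas.aemeasurable hcontmin.measurable.aestronglyMeasurable]
    have hptw2 : ∀ ω, min (lam * ‖Y ω‖ ^ c + b) M
        = b + lam * min (‖Y ω‖ ^ c) ((M - b) / lam) := by
      intro ω
      rw [mul_min_of_nonneg _ _ hlam0.le, mul_div_cancel₀ _ hlam0.ne', add_comm b,
        ← min_add_add_right, sub_add_cancel]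
    have hE3 : ∫ ω, min (lam * ‖Y ω‖ ^ c + b) M ∂P = b + lam * f ((M - b) / lam) := by
      rw [integral_congr_ae (ae_of_all _ hptw2),
        integral_add (integrable_const b) ((hfInt _).const_mul lam)]
      simp only [integral_const, measure_univ, measureReal_def, ENNReal.toReal_one, smul_eq_mul, one_mul, hfdef]
      rw [integral_const_mul]
    calc f M = _ := hA'
      _ ≤ ∫ ω, F (Y ω, (α ω, ξ ω)) ∂P := hB'
      _ = ∫ y, ∫ p, F (y, p) ∂μw ∂μy := hC'
      _ ≤ ∫ y, min (lam * ‖y‖ ^ c + b) M ∂μy := hE1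
      _ = ∫ ω, min (lam * ‖Y ω‖ ^ c + b) M ∂P := hE2
      _ = b + lam * f ((M - b) / lam) := hE3
  -- the tail-cut estimate
  have hcut : ∀ δ > (0:ℝ), ∃ T ≥ (0:ℝ), ∃ p ≥ (0:ℝ), p ≤ δ ∧ ∀ t, f t ≤ T + t * p := by
    intro δ hδ
    have hset : ∀ n : ℕ, MeasurableSet {ω | (n:ℝ) < ‖Y ω‖ ^ c} := fun n =>
      hVmeas measurableSet_Ioi
    have hanti : Antitone fun n : ℕ => {ω | (n:ℝ) < ‖Y ω‖ ^ c} := by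
      intro n m h ω hω
      simp only [mem_setOf_eq] at hω ⊢
      exact lt_of_le_of_lt (Nat.cast_le.mpr h) hω
    have hempty : ⋂ n : ℕ, {ω | (n:ℝ) < ‖Y ω‖ ^ c} = ∅ := by
      ext ω
      simp only [mem_iInter, mem_setOf_eq, mem_empty_iff_false, iff_false, not_forall, not_lt]
      obtain ⟨n, hn⟩ := exists_nat_gt (‖Y ω‖ ^ c)
      exact ⟨n, hn.le⟩
    have htends := tendsto_measure_iInter_atTop (fun n => (hset n).nullMeasurableSet) hanti
      ⟨0, measure_ne_top P _⟩
    rw [hempty, measure_empty] at htends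
    have htoReal : Tendsto (fun n : ℕ => (P {ω | (n:ℝ) < ‖Y ω‖ ^ c}).toReal) atTop (𝓝 0) := by
      have h0 : Tendsto ENNReal.toReal (𝓝 (0:ℝ≥0∞)) (𝓝 (0:ℝ≥0∞).toReal) :=
        ENNReal.tendsto_toReal (by simp)
      simpa [Function.comp_def] using h0.comp htends
    obtain ⟨n, hn⟩ := (htoReal.eventually (gt_mem_nhds hδ)).exists
    refine ⟨(n:ℝ), Nat.cast_nonneg n, (P {ω | (n:ℝ) < ‖Y ω‖ ^ c}).toReal,
      ENNReal.toReal_nonneg, hn.le, ?_⟩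
    intro t
    have hptw : ∀ ω, min (‖Y ω‖ ^ c) t ≤ min (‖Y ω‖ ^ c) (n:ℝ) +
        Set.indicator {ω | (n:ℝ) < ‖Y ω‖ ^ c} (fun _ => t) ω := by
      intro ω
      rcases le_or_gt (‖Y ω‖ ^ c) (n:ℝ) with h | h
      · rw [Set.indicator_of_notMem (by simpa using not_lt.mpr h), add_zero, min_eq_left h]
        exact min_le_left _ _
      · rw [Set.indicator_of_mem (by simpa using h), min_eq_right h.le]
        exact (min_le_right _ _).trans (le_add_of_nonneg_left (Nat.cast_nonneg n))
    calc f t ≤ ∫ ω, (min (‖Y ω‖ ^ c) (n:ℝ) +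
          Set.indicator {ω | (n:ℝ) < ‖Y ω‖ ^ c} (fun _ => t) ω) ∂P :=
          integral_mono (hfInt t)
            ((hfInt (n:ℝ)).add ((integrable_const t).indicator (hset n))) hptw
      _ = f (n:ℝ) + (P {ω | (n:ℝ) < ‖Y ω‖ ^ c}).toReal * t := by
          rw [integral_add (hfInt (n:ℝ)) ((integrable_const t).indicator (hset n)),
            integral_indicator_const _ (hset n)]
          simp [smul_eq_mul, hfdef, measureReal_def]
      _ ≤ (n:ℝ) + t * (P {ω | (n:ℝ) < ‖Y ω‖ ^ c}).toReal := by
          have := hfle (n:ℝ)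
          linarith [mul_comm (P {ω | (n:ℝ) < ‖Y ω‖ ^ c}).toReal t]
  -- conclude via the abstract iteration lemma
  have hfB : ∀ M, f M ≤ b / (1 - lam) := trunc_iteration hlam0 hlam1 hb0 hfle hkey hcut
  refine ⟨hVmeas.aestronglyMeasurable, ?_⟩
  have hbound : ∫⁻ ω, (‖‖Y ω‖ ^ c‖₊ : ℝ≥0∞) ∂P ≤ ENNReal.ofReal (b / (1 - lam)) := by
    have hpt : ∀ ω, (‖‖Y ω‖ ^ c‖₊ : ℝ≥0∞) = ⨆ n : ℕ, ENNReal.ofReal (min (‖Y ω‖ ^ c) n) := by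
      intro ω
      rw [← enorm_eq_nnnorm, Real.enorm_eq_ofReal (hV0 ω)]
      refine le_antisymm ?_ (iSup_le fun n => ENNReal.ofReal_le_ofReal (min_le_left _ _))
      obtain ⟨n, hn⟩ := exists_nat_gt (‖Y ω‖ ^ c)
      exact le_iSup_of_le n (by rw [min_eq_left hn.le])
    calc ∫⁻ ω, (‖‖Y ω‖ ^ c‖₊ : ℝ≥0∞) ∂P
        = ∫⁻ ω, ⨆ n : ℕ, ENNReal.ofReal (min (‖Y ω‖ ^ c) n) ∂P := lintegral_congr hpt
      _ = ⨆ n : ℕ, ∫⁻ ω, ENNReal.ofReal (min (‖Y ω‖ ^ c) n) ∂P :=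
          lintegral_iSup (fun n => (hVmeas.min measurable_const).ennreal_ofReal)
            (fun n m h ω => ENNReal.ofReal_le_ofReal (min_le_min le_rfl (Nat.cast_le.mpr h)))
      _ ≤ ENNReal.ofReal (b / (1 - lam)) := by
          refine iSup_le fun n => ?_
          rw [← ofReal_integral_eq_lintegral_ofReal (hfInt (n:ℝ))
            (ae_of_all _ fun ω => le_min (hV0 ω) (Nat.cast_nonneg n))]
          exact ENNReal.ofReal_le_ofReal (hfB (n:ℝ))
  exact lt_of_le_of_lt hbound ENNReal.ofReal_lt_top

end
end

section
/- Assume that α_m → 1 in probability as m → ∞ and that γ_m/β_m → ρ ∈ [0,∞) as m → ∞. If there exists ε > 0 such that 𝔼 inf{t ≥ 1 : Σ_{i=1}^t ξ_i ∈ ρA + B^d(0,ε)} = ∞, then liminf_{m→∞} ℙ(τ^{(m)} > j) > 0 for every j ∈ ℕ, and 𝔼τ^{(m)} → ∞ as m → ∞. -/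
open MeasureTheory ProbabilityTheory Filter Set
open scoped ENNReal NNReal Topology Pointwise RealInnerProductSpace Classical

noncomputable section

/-- The AR(1) sequence `X₀ = 0`, `X_{t+1} = α_{t+1} X_t + β ξ_{t+1}`. -/
def ARChain {Ω : Type*} {d : ℕ} (α : ℕ → Ω → ℝ) (β : ℝ)
    (ξ : ℕ → Ω → EuclideanSpace ℝ (Fin d)) : ℕ → Ω → EuclideanSpace ℝ (Fin d)
  | 0 => fun _ => 0
  | (t + 1) => fun ω => α (t + 1) ω • ARChain α β ξ t ω + β • ξ (t + 1) ω

/-- The random walk `S₀ = 0`, `S_t = ξ₁ + ⋯ + ξ_t`. -/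
def RWalk {Ω : Type*} {d : ℕ} (ξ : ℕ → Ω → EuclideanSpace ℝ (Fin d))
    (t : ℕ) (ω : Ω) : EuclideanSpace ℝ (Fin d) :=
  ∑ i ∈ Finset.range t, ξ (i + 1) ω

/-- First hitting time `min {t ≥ 1 : X_t ∈ S}`, valued in `ℕ∞`. -/
def hitTime {Ω E : Type*} (X : ℕ → Ω → E) (S : Set E) (ω : Ω) : ℕ∞ :=
  sInf {n : ℕ∞ | ∃ t : ℕ, n = t ∧ 1 ≤ t ∧ X t ω ∈ S}

lemma hitTime_le_iff {Ω E : Type*} (X : ℕ → Ω → E) (S : Set E) (ω : Ω) (j : ℕ) :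
    hitTime X S ω ≤ (j : ℕ∞) ↔ ∃ t : ℕ, 1 ≤ t ∧ t ≤ j ∧ X t ω ∈ S := by
  constructor
  · intro h
    have hne : {n : ℕ∞ | ∃ t : ℕ, n = (t:ℕ∞) ∧ 1 ≤ t ∧ X t ω ∈ S}.Nonempty := by
      by_contra hne
      rw [Set.not_nonempty_iff_eq_empty] at hne
      rw [hitTime, hne, sInf_empty] at h
      exact absurd (top_le_iff.1 h) (by simp)
    obtain ⟨t, ht_eq, ht1, htS⟩ := csInf_mem hne
    refine ⟨t, ht1, ?_, htS⟩
    have : (t : ℕ∞) ≤ (j : ℕ∞) := ht_eq ▸ h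
    exact_mod_cast this
  · rintro ⟨t, ht1, htj, htS⟩
    calc hitTime X S ω ≤ (t : ℕ∞) := sInf_le ⟨t, rfl, ht1, htS⟩
    _ ≤ (j : ℕ∞) := by exact_mod_cast htj

lemma lt_hitTime_iff {Ω E : Type*} (X : ℕ → Ω → E) (S : Set E) (ω : Ω) (j : ℕ) :
    (j : ℕ∞) < hitTime X S ω ↔ ∀ t : ℕ, 1 ≤ t → t ≤ j → X t ω ∉ S := by
  rw [← not_le, hitTime_le_iff]
  push_neg
  tauto

lemma measurableSet_hitTime_le {Ω E : Type*} [MeasurableSpace Ω] [MeasurableSpace E]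
    {X : ℕ → Ω → E} (hX : ∀ t, Measurable (X t)) {S : Set E} (hS : MeasurableSet S) (j : ℕ) :
    MeasurableSet {ω | hitTime X S ω ≤ (j : ℕ∞)} := by
  have : {ω | hitTime X S ω ≤ (j:ℕ∞)} = ⋃ t ∈ Finset.Icc 1 j, (X t) ⁻¹' S := by
    ext ω
    simp only [Set.mem_setOf_eq, hitTime_le_iff, Set.mem_iUnion, Finset.mem_Icc,
      Set.mem_preimage, exists_prop]
    tauto
  rw [this]
  exact (Finset.Icc 1 j).measurableSet_biUnion (fun t _ => (hX t) hS)

lemma measurableSet_lt_hitTime {Ω E : Type*} [MeasurableSpace Ω] [MeasurableSpace E]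
    {X : ℕ → Ω → E} (hX : ∀ t, Measurable (X t)) {S : Set E} (hS : MeasurableSet S) (j : ℕ) :
    MeasurableSet {ω | (j : ℕ∞) < hitTime X S ω} := by
  have : {ω | (j : ℕ∞) < hitTime X S ω} = {ω | hitTime X S ω ≤ (j:ℕ∞)}ᶜ := by
    ext ω
    simp only [Set.mem_compl_iff, Set.mem_setOf_eq, not_le]
  rw [this]
  exact (measurableSet_hitTime_le hX hS j).compl

lemma enat_toENNReal_eq_tsum (n : ℕ∞) :
    (n : ℝ≥0∞) = ∑' j : ℕ, (if (j : ℕ∞) < n then (1:ℝ≥0∞) else 0) := by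
  cases n with
  | top =>
    have : ∀ j : ℕ, (if (j:ℕ∞) < ⊤ then (1:ℝ≥0∞) else 0) = 1 := fun j => if_pos (by simp [lt_top_iff_ne_top])
    rw [tsum_congr this, ENNReal.tsum_const_eq_top_of_ne_zero one_ne_zero]
    simp
  | coe k =>
    rw [tsum_eq_sum (s := Finset.range k) (by
      intro j hj
      rw [if_neg]
      simp only [Finset.mem_range, not_lt] at hj
      exact_mod_cast not_lt.2 (by exact_mod_cast hj))]
    rw [Finset.sum_congr rfl (fun j hj => by
      rw [if_pos]
      simp only [Finset.mem_range] at hj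
      exact_mod_cast hj)]
    simp

lemma lintegral_enat {Ω : Type*} [MeasurableSpace Ω] (P : Measure Ω) (f : Ω → ℕ∞)
    (hf : ∀ j : ℕ, MeasurableSet {ω | (j : ℕ∞) < f ω}) :
    ∫⁻ ω, (f ω : ℝ≥0∞) ∂P = ∑' j : ℕ, P {ω | (j : ℕ∞) < f ω} := by
  have : ∀ ω, (f ω : ℝ≥0∞) = ∑' j : ℕ, Set.indicator {ω | (j:ℕ∞) < f ω} (fun _ => (1:ℝ≥0∞)) ω := by
    intro ω
    rw [enat_toENNReal_eq_tsum]
    congr 1; ext j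
    rw [Set.indicator_apply]; rfl
  calc ∫⁻ ω, (f ω : ℝ≥0∞) ∂P
      = ∫⁻ ω, ∑' j : ℕ, Set.indicator {ω | (j:ℕ∞) < f ω} (fun _ => (1:ℝ≥0∞)) ω ∂P :=
        lintegral_congr this
    _ = ∑' j : ℕ, ∫⁻ ω, Set.indicator {ω | (j:ℕ∞) < f ω} (fun _ => (1:ℝ≥0∞)) ω ∂P :=
        lintegral_tsum (fun j => ((measurable_const).indicator (hf j)).aemeasurable)
    _ = ∑' j : ℕ, P {ω | (j : ℕ∞) < f ω} := by
        refine tsum_congr fun j => ?_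
        rw [lintegral_indicator (hf j) (fun _ => (1:ℝ≥0∞)), setLIntegral_one]

lemma measurable_ARChain {Ω : Type*} [MeasurableSpace Ω] {d : ℕ} {α : ℕ → Ω → ℝ} {β : ℝ}
    {ξ : ℕ → Ω → EuclideanSpace ℝ (Fin d)} (hα : ∀ t, Measurable (α t))
    (hξ : ∀ t, Measurable (ξ t)) (t : ℕ) : Measurable (ARChain α β ξ t) := by
  induction t with
  | zero => exact measurable_const
  | succ t ih => exact ((hα (t+1)).smul ih).add ((hξ (t+1)).const_smul β)

lemma measurable_RWalk {Ω : Type*} [MeasurableSpace Ω] {d : ℕ}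
    {ξ : ℕ → Ω → EuclideanSpace ℝ (Fin d)} (hξ : ∀ t, Measurable (ξ t)) (t : ℕ) :
    Measurable (RWalk ξ t) := by
  unfold RWalk
  exact Finset.measurable_sum _ (fun i _ => hξ (i+1))

lemma RWalk_succ {Ω : Type*} {d : ℕ} (ξ : ℕ → Ω → EuclideanSpace ℝ (Fin d)) (t : ℕ) (ω : Ω) :
    RWalk ξ (t+1) ω = RWalk ξ t ω + ξ (t+1) ω := Finset.sum_range_succ _ _

/-- The recursion for `D_t = β⁻¹ • X_t - S_t`. -/
lemma diff_rec {Ω : Type*} {d : ℕ} (α : ℕ → Ω → ℝ) (β : ℝ) (hβ : β ≠ 0)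
    (ξ : ℕ → Ω → EuclideanSpace ℝ (Fin d)) (t : ℕ) (ω : Ω) :
    β⁻¹ • ARChain α β ξ (t+1) ω - RWalk ξ (t+1) ω
      = α (t+1) ω • (β⁻¹ • ARChain α β ξ t ω - RWalk ξ t ω)
        + (α (t+1) ω - 1) • RWalk ξ t ω := by
  show β⁻¹ • (α (t + 1) ω • ARChain α β ξ t ω + β • ξ (t + 1) ω) - RWalk ξ (t+1) ω = _
  rw [RWalk_succ, smul_add, smul_smul, smul_smul, inv_mul_cancel₀ hβ, one_smul,
    smul_sub, sub_smul, one_smul, mul_comm, ← smul_smul]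
  abel

/-- Tightness of a single random variable. -/
lemma tight_of_measurable {Ω : Type*} [MeasurableSpace Ω] (P : Measure Ω)
    [IsProbabilityMeasure P] (Y : Ω → ℝ) (hY : Measurable Y) {η : ℝ≥0∞} (hη : 0 < η) :
    ∃ M : ℝ, 0 < M ∧ P {ω | M ≤ Y ω} ≤ η := by
  have h1 : Tendsto (fun n : ℕ => P {ω | (n : ℝ) ≤ Y ω}) atTop
      (nhds (P (⋂ n : ℕ, {ω | (n : ℝ) ≤ Y ω}))) := by
    refine tendsto_measure_iInter_atTop
      (fun n => (measurableSet_le measurable_const hY).nullMeasurableSet)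
      (fun a b hab => ?_) ⟨0, measure_ne_top _ _⟩
    intro ω hω
    simp only [Set.mem_setOf_eq] at hω ⊢
    exact le_trans (by exact_mod_cast hab) hω
  have h2 : (⋂ n : ℕ, {ω | (n : ℝ) ≤ Y ω}) = ∅ := by
    ext ω
    simp only [Set.mem_iInter, Set.mem_setOf_eq, Set.mem_empty_iff_false, iff_false, not_forall,
      not_le]
    obtain ⟨n, hn⟩ := exists_nat_gt (Y ω)
    exact ⟨n, hn⟩
  rw [h2, measure_empty] at h1
  have := (ENNReal.tendsto_nhds_zero.1 h1) η hη
  obtain ⟨n, hn⟩ := (this.and (eventually_ge_atTop 1)).exists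
  exact ⟨n, by exact_mod_cast hn.2, hn.1⟩

lemma conv_in_prob {Ω : Type*} [MeasurableSpace Ω] (P : Measure Ω) [IsProbabilityMeasure P]
    {d : ℕ} (αc : ℕ → ℕ → Ω → ℝ) (β : ℕ → ℝ) (ξ : ℕ → Ω → EuclideanSpace ℝ (Fin d))
    (hβpos : ∀ m, 0 < β m)
    (hξmeas : ∀ t, Measurable (ξ t))
    (hα1 : ∀ t c, 0 < c → Tendsto (fun m => P {ω | c ≤ |αc m t ω - 1|}) atTop (nhds 0))
    (t : ℕ) (δ : ℝ) (hδ : 0 < δ) :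
    Tendsto (fun m => P {ω | δ ≤ ‖(β m)⁻¹ • ARChain (αc m) (β m) ξ t ω - RWalk ξ t ω‖})
      atTop (nhds 0) := by
  induction t generalizing δ with
  | zero =>
    have he : ∀ m, {ω : Ω | δ ≤ ‖(β m)⁻¹ • ARChain (αc m) (β m) ξ 0 ω - RWalk ξ 0 ω‖} = ∅ := by
      intro m; ext ω
      simp only [Set.mem_setOf_eq, Set.mem_empty_iff_false, iff_false, not_le]
      show ‖(β m)⁻¹ • (0 : EuclideanSpace ℝ (Fin d)) - ∑ i ∈ Finset.range 0, ξ (i+1) ω‖ < δ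
      simpa using hδ
    simp only [he, measure_empty]
    exact tendsto_const_nhds
  | succ t ih =>
    rw [ENNReal.tendsto_nhds_zero]
    intro η hη
    have h4 : (0 : ℝ≥0∞) < η / 4 := ENNReal.div_pos hη.ne' (by norm_num)
    obtain ⟨M, hM, hMP⟩ :=
      tight_of_measurable P (fun ω => ‖RWalk ξ t ω‖) (measurable_RWalk hξmeas t).norm h4
    have h1 := ENNReal.tendsto_nhds_zero.1 (hα1 (t+1) 1 one_pos) (η/4) h4
    have h2 := ENNReal.tendsto_nhds_zero.1 (ih (δ/4) (by positivity)) (η/4) h4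
    have h3 := ENNReal.tendsto_nhds_zero.1 (hα1 (t+1) (δ/(2*M)) (by positivity)) (η/4) h4
    filter_upwards [h1, h2, h3] with m hm1 hm2 hm3
    set D : Ω → EuclideanSpace ℝ (Fin d) :=
      fun ω => (β m)⁻¹ • ARChain (αc m) (β m) ξ t ω - RWalk ξ t ω with hD
    have hsub : {ω | δ ≤ ‖(β m)⁻¹ • ARChain (αc m) (β m) ξ (t+1) ω - RWalk ξ (t+1) ω‖} ⊆
        ({ω | (1:ℝ) ≤ |αc m (t+1) ω - 1|} ∪ {ω | δ/4 ≤ ‖D ω‖})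
        ∪ ({ω | δ/(2*M) ≤ |αc m (t+1) ω - 1|} ∪ {ω | M ≤ ‖RWalk ξ t ω‖}) := by
      intro ω hω
      simp only [Set.mem_setOf_eq] at hω
      by_contra hcon
      simp only [Set.mem_union, Set.mem_setOf_eq, not_or, not_le] at hcon
      obtain ⟨⟨hc1, hc2⟩, hc3, hc4⟩ := hcon
      rw [diff_rec (αc m) (β m) (hβpos m).ne' ξ t ω] at hω
      set a := αc m (t+1) ω with ha
      have habs : |a| ≤ |a - 1| + 1 := by
        calc |a| = |(a - 1) + 1| := by ring_nf
        _ ≤ |a - 1| + |(1:ℝ)| := abs_add_le _ _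
        _ = |a - 1| + 1 := by rw [abs_one]
      have hb1 : ‖a • D ω‖ ≤ 2 * ‖D ω‖ := by
        rw [norm_smul]
        apply mul_le_mul_of_nonneg_right _ (norm_nonneg _)
        calc |a| ≤ |a - 1| + 1 := habs
        _ ≤ 2 := by linarith [hc1.le]
      have hb2 : ‖(a - 1) • RWalk ξ t ω‖ < δ / 2 := by
        rw [norm_smul, Real.norm_eq_abs]
        have hM2 : |a - 1| * (2 * M) < δ := (lt_div_iff₀ (by positivity)).1 hc3
        have : |a - 1| * ‖RWalk ξ t ω‖ ≤ |a - 1| * M :=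
          mul_le_mul_of_nonneg_left hc4.le (abs_nonneg _)
        nlinarith [abs_nonneg (a - 1), norm_nonneg (RWalk ξ t ω)]
      have : ‖a • D ω + (a - 1) • RWalk ξ t ω‖ < δ := by
        calc ‖a • D ω + (a - 1) • RWalk ξ t ω‖ ≤ ‖a • D ω‖ + ‖(a - 1) • RWalk ξ t ω‖ :=
          norm_add_le _ _
        _ < δ := by
            have := hb1.trans (by linarith : 2 * ‖D ω‖ ≤ 2 * ‖D ω‖)
            nlinarith [norm_nonneg (D ω)]
      exact absurd hω this.not_ge
    calc P {ω | δ ≤ ‖(β m)⁻¹ • ARChain (αc m) (β m) ξ (t+1) ω - RWalk ξ (t+1) ω‖}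
        ≤ P (({ω | (1:ℝ) ≤ |αc m (t+1) ω - 1|} ∪ {ω | δ/4 ≤ ‖D ω‖})
            ∪ ({ω | δ/(2*M) ≤ |αc m (t+1) ω - 1|} ∪ {ω | M ≤ ‖RWalk ξ t ω‖})) :=
          measure_mono hsub
      _ ≤ (P {ω | (1:ℝ) ≤ |αc m (t+1) ω - 1|} + P {ω | δ/4 ≤ ‖D ω‖})
          + (P {ω | δ/(2*M) ≤ |αc m (t+1) ω - 1|} + P {ω | M ≤ ‖RWalk ξ t ω‖}) := by
          refine le_trans (measure_union_le _ _) (add_le_add (measure_union_le _ _)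
            (measure_union_le _ _))
      _ ≤ (η/4 + η/4) + (η/4 + η/4) := by
          exact add_le_add (add_le_add hm1 hm2) (add_le_add hm3 hMP)
      _ = η := by
          rw [show η/4 + η/4 + (η/4 + η/4) = 4 * (η/4) by ring]
          exact ENNReal.mul_div_cancel' (by norm_num) (by norm_num)

/-- Theorem 2: if `α_m → 1` in probability, `γ_m/β_m → ρ ∈ [0,∞)` and the
random walk `S_t = ∑_{i≤t} ξ_i` has infinite expected hitting time of `ρA + B(0,ε)` for some
`ε > 0`, then `liminf_m ℙ(τ^{(m)} > j) > 0` for every `j` and `𝔼τ^{(m)} → ∞`. -/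
theorem statement6
    {Ω : Type*} [MeasurableSpace Ω] (P : Measure Ω) [IsProbabilityMeasure P]
    (d : ℕ) (hd : 0 < d)
    (αc : ℕ → ℕ → Ω → ℝ) (β : ℕ → ℝ) (ξ : ℕ → Ω → EuclideanSpace ℝ (Fin d))
    (γ : ℕ → ℝ) (hγ : ∀ m, 0 < γ m) (hβpos : ∀ m, 0 < β m)
    (hαmeas : ∀ m t, Measurable (αc m t)) (hξmeas : ∀ t, Measurable (ξ t))
    (hαpos : ∀ m t, ∀ᵐ ω ∂P, 0 < αc m t ω)
    -- i.i.d. structure of the driving sequences, for every m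
    (hindep : ∀ m, iIndepFun
      (fun t ω => (αc m t ω, ξ t ω)) P)
    (hpair : ∀ m t, IndepFun (αc m t) (ξ t) P)
    (hidα : ∀ m t, IdentDistrib (αc m t) (αc m 1) P P)
    (hidξ : ∀ t, IdentDistrib (ξ t) (ξ 1) P P)
    -- the set A
    (A : Set (EuclideanSpace ℝ (Fin d))) (hA : MeasurableSet A)
    (r₁ r₂ : ℝ) (hr₁ : 0 < r₁) (hr₁₂ : r₁ ≤ r₂)
    (hAsub : Metric.ball (0 : EuclideanSpace ℝ (Fin d)) r₁ ⊆ A)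
    (hAsup : A ⊆ Metric.ball (0 : EuclideanSpace ℝ (Fin d)) r₂)
    -- α_m → 1 in probability
    (hαto1 : TendstoInMeasure P (fun m => αc m 1) atTop (fun _ => (1 : ℝ)))
    -- γ_m / β_m → ρ ∈ [0, ∞)
    (ρ : ℝ) (hρ : 0 ≤ ρ)
    (hρlim : Tendsto (fun m => γ m / β m) atTop (nhds ρ))
    -- 𝔼 inf{t ≥ 1 : S_t ∈ ρ A + B(0, ε)} = ∞ for some ε > 0
    (hinf : ∃ ε : ℝ, 0 < ε ∧
      ∫⁻ ω, (hitTime (RWalk ξ)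
        (ρ • A + Metric.ball (0 : EuclideanSpace ℝ (Fin d)) ε) ω : ℝ≥0∞) ∂P = ⊤) :
    (∀ j : ℕ, 0 < atTop.liminf (fun m =>
      P {ω | (j : ℕ∞) < hitTime (ARChain (αc m) (β m) ξ) (γ m • A) ω})) ∧
    Tendsto (fun m =>
        ∫⁻ ω, (hitTime (ARChain (αc m) (β m) ξ) (γ m • A) ω : ℝ≥0∞) ∂P)
      atTop (nhds ⊤) := by
  obtain ⟨ε, hε, hEσ⟩ := hinf
  set Tset : Set (EuclideanSpace ℝ (Fin d)) :=
    ρ • A + Metric.ball (0 : EuclideanSpace ℝ (Fin d)) ε with hTset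
  set σ : Ω → ℕ∞ := hitTime (RWalk ξ) Tset with hσdef
  have hr₂ : 0 < r₂ := lt_of_lt_of_le hr₁ hr₁₂
  have hXmeas : ∀ m t, Measurable (ARChain (αc m) (β m) ξ t) :=
    fun m => measurable_ARChain (hαmeas m) hξmeas
  have hSmeas : ∀ t, Measurable (RWalk ξ t) := measurable_RWalk hξmeas
  have hTopen : IsOpen Tset := Metric.isOpen_ball.add_left
  have hσmeas : ∀ j : ℕ, MeasurableSet {ω | (j : ℕ∞) < σ ω} :=
    fun j => measurableSet_lt_hitTime hSmeas hTopen.measurableSet j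
  have hσmeas' : ∀ j : ℕ, MeasurableSet {ω | σ ω ≤ (j : ℕ∞)} :=
    fun j => measurableSet_hitTime_le hSmeas hTopen.measurableSet j
  have hτmeas : ∀ (m : ℕ) (j : ℕ), MeasurableSet
      {ω | ((j : ℕ) : ℕ∞) < hitTime (ARChain (αc m) (β m) ξ) (γ m • A) ω} :=
    fun m j => measurableSet_lt_hitTime (hXmeas m) (hA.const_smul₀ (γ m)) j
  -- transfer of convergence in probability to every index t
  have hα1 : ∀ t c, 0 < c → Tendsto (fun m => P {ω | c ≤ |αc m t ω - 1|}) atTop (nhds 0) := by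
    intro t c hc
    have heq : ∀ m, P {ω | c ≤ |αc m t ω - 1|} = P {ω | c ≤ dist (αc m 1 ω) 1} := by
      intro m
      have h2 : IdentDistrib ((fun x : ℝ => |x - 1|) ∘ (αc m t))
          ((fun x : ℝ => |x - 1|) ∘ (αc m 1)) P P := (hidα m t).comp (by fun_prop)
      have h3 := h2.measure_mem_eq (measurableSet_Ici (a := c))
      have e1 : ((fun x : ℝ => |x - 1|) ∘ (αc m t)) ⁻¹' (Set.Ici c) = {ω | c ≤ |αc m t ω - 1|} :=
        rfl
      have e2 : ((fun x : ℝ => |x - 1|) ∘ (αc m 1)) ⁻¹' (Set.Ici c)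
          = {ω | c ≤ dist (αc m 1 ω) 1} := by
        ext ω; simp [Real.dist_eq]
      rw [e1, e2] at h3
      exact h3
    have := tendstoInMeasure_iff_dist.1 hαto1 c hc
    refine Tendsto.congr (fun m => (heq m).symm) this
  have hconv := conv_in_prob P αc β ξ hβpos hξmeas hα1
  -- the key comparison estimate
  have key : ∀ (j : ℕ) (η : ℝ≥0∞), 0 < η →
      ∀ᶠ m in atTop, P {ω | (j : ℕ∞) < σ ω}
        ≤ P {ω | (j : ℕ∞) < hitTime (ARChain (αc m) (β m) ξ) (γ m • A) ω} + η := by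
    intro j η hη
    have hη' : (0 : ℝ≥0∞) < η / ((j : ℝ≥0∞) + 1) :=
      ENNReal.div_pos hη.ne' (by simp)
    have hBad : ∀ᶠ m in atTop, ∀ t ∈ Finset.Icc 1 j,
        P {ω | ε/2 ≤ ‖(β m)⁻¹ • ARChain (αc m) (β m) ξ t ω - RWalk ξ t ω‖}
          ≤ η / ((j : ℝ≥0∞) + 1) := by
      rw [eventually_all_finset]
      intro t _
      exact ENNReal.tendsto_nhds_zero.1 (hconv t (ε/2) (half_pos hε)) _ hη'
    have hγβ : ∀ᶠ m in atTop, |γ m / β m - ρ| < ε / (2 * r₂) := by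
      have := Metric.tendsto_nhds.1 hρlim (ε / (2 * r₂)) (by positivity)
      filter_upwards [this] with m hm
      rwa [Real.dist_eq] at hm
    filter_upwards [hBad, hγβ] with m hBm hγm
    have hsub : {ω | hitTime (ARChain (αc m) (β m) ξ) (γ m • A) ω ≤ (j : ℕ∞)} ⊆
        {ω | σ ω ≤ (j : ℕ∞)} ∪
          ⋃ t ∈ Finset.Icc 1 j,
            {ω | ε/2 ≤ ‖(β m)⁻¹ • ARChain (αc m) (β m) ξ t ω - RWalk ξ t ω‖} := by
      intro ω hω
      rw [Set.mem_setOf_eq, hitTime_le_iff] at hω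
      obtain ⟨t, ht1, htj, htS⟩ := hω
      by_cases hb : ε/2 ≤ ‖(β m)⁻¹ • ARChain (αc m) (β m) ξ t ω - RWalk ξ t ω‖
      · exact Or.inr (Set.mem_biUnion (Finset.mem_Icc.2 ⟨ht1, htj⟩) hb)
      · left
        rw [Set.mem_setOf_eq, hσdef, hitTime_le_iff]
        refine ⟨t, ht1, htj, ?_⟩
        push_neg at hb
        obtain ⟨a, haA, hXa⟩ := Set.mem_smul_set.1 htS
        have hXa' : (β m)⁻¹ • ARChain (αc m) (β m) ξ t ω = (γ m / β m) • a := by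
          rw [← hXa, smul_smul, inv_mul_eq_div]
        refine Set.mem_add.2 ⟨ρ • a, Set.smul_mem_smul_set haA,
          RWalk ξ t ω - ρ • a, ?_, by abel⟩
        rw [Metric.mem_ball, dist_zero_right]
        have h1 : ‖RWalk ξ t ω - (γ m / β m) • a‖ < ε/2 := by
          rw [← hXa', norm_sub_rev]; exact hb
        have h2 : ‖((γ m / β m) - ρ) • a‖ < ε/2 := by
          rw [norm_smul, Real.norm_eq_abs]
          have hna : ‖a‖ < r₂ := by
            have := hAsup haA
            rwa [Metric.mem_ball, dist_zero_right] at this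
          calc |γ m / β m - ρ| * ‖a‖ ≤ |γ m / β m - ρ| * r₂ :=
                mul_le_mul_of_nonneg_left hna.le (abs_nonneg _)
            _ < (ε / (2 * r₂)) * r₂ := mul_lt_mul_of_pos_right hγm hr₂
            _ = ε/2 := by field_simp
        have hdecomp : RWalk ξ t ω - ρ • a
            = (RWalk ξ t ω - (γ m / β m) • a) + ((γ m / β m - ρ) • a) := by
          rw [sub_smul]; abel
        calc ‖RWalk ξ t ω - ρ • a‖
            = ‖(RWalk ξ t ω - (γ m / β m) • a) + ((γ m / β m - ρ) • a)‖ := by rw [hdecomp]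
          _ ≤ ‖RWalk ξ t ω - (γ m / β m) • a‖ + ‖((γ m / β m) - ρ) • a‖ := norm_add_le _ _
          _ < ε := by linarith
    have hBsum : P (⋃ t ∈ Finset.Icc 1 j,
        {ω | ε/2 ≤ ‖(β m)⁻¹ • ARChain (αc m) (β m) ξ t ω - RWalk ξ t ω‖}) ≤ η := by
      calc P (⋃ t ∈ Finset.Icc 1 j,
            {ω | ε/2 ≤ ‖(β m)⁻¹ • ARChain (αc m) (β m) ξ t ω - RWalk ξ t ω‖})
          ≤ ∑ t ∈ Finset.Icc 1 j,
            P {ω | ε/2 ≤ ‖(β m)⁻¹ • ARChain (αc m) (β m) ξ t ω - RWalk ξ t ω‖} :=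
            measure_biUnion_finset_le _ _
        _ ≤ ∑ _t ∈ Finset.Icc 1 j, η / ((j : ℝ≥0∞) + 1) := Finset.sum_le_sum hBm
        _ = (Finset.Icc 1 j).card • (η / ((j : ℝ≥0∞) + 1)) := Finset.sum_const _
        _ = (j : ℝ≥0∞) * (η / ((j : ℝ≥0∞) + 1)) := by
            rw [Nat.card_Icc]; simp [nsmul_eq_mul]
        _ ≤ ((j : ℝ≥0∞) + 1) * (η / ((j : ℝ≥0∞) + 1)) :=
            mul_le_mul_left le_self_add _
        _ = η := ENNReal.mul_div_cancel' (by simp) (by simp)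
    have h1 : P {ω | hitTime (ARChain (αc m) (β m) ξ) (γ m • A) ω ≤ (j : ℕ∞)}
        ≤ P {ω | σ ω ≤ (j : ℕ∞)} + η := by
      refine (measure_mono hsub).trans ?_
      exact (measure_union_le _ _).trans (add_le_add_right hBsum _)
    have hcompl : P {ω | (j : ℕ∞) < σ ω} = 1 - P {ω | σ ω ≤ (j : ℕ∞)} := by
      have : {ω | (j : ℕ∞) < σ ω} = {ω | σ ω ≤ (j : ℕ∞)}ᶜ := by
        ext ω
        simp only [Set.mem_compl_iff, Set.mem_setOf_eq, not_le]
      rw [this, prob_compl_eq_one_sub (hσmeas' j)]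
    rw [hcompl, tsub_le_iff_right]
    calc (1 : ℝ≥0∞) = P Set.univ := (measure_univ (μ := P)).symm
      _ ≤ P ({ω | (j : ℕ∞) < hitTime (ARChain (αc m) (β m) ξ) (γ m • A) ω}
            ∪ {ω | hitTime (ARChain (αc m) (β m) ξ) (γ m • A) ω ≤ (j : ℕ∞)}) := by
          refine measure_mono fun ω _ => ?_
          rcases lt_or_ge (j : ℕ∞) (hitTime (ARChain (αc m) (β m) ξ) (γ m • A) ω) with h | h
          · exact Or.inl h
          · exact Or.inr h
      _ ≤ P {ω | (j : ℕ∞) < hitTime (ARChain (αc m) (β m) ξ) (γ m • A) ω}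
            + P {ω | hitTime (ARChain (αc m) (β m) ξ) (γ m • A) ω ≤ (j : ℕ∞)} :=
          measure_union_le _ _
      _ ≤ P {ω | (j : ℕ∞) < hitTime (ARChain (αc m) (β m) ξ) (γ m • A) ω}
            + (P {ω | σ ω ≤ (j : ℕ∞)} + η) := add_le_add_right h1 _
      _ = P {ω | (j : ℕ∞) < hitTime (ARChain (αc m) (β m) ξ) (γ m • A) ω} + η
            + P {ω | σ ω ≤ (j : ℕ∞)} := by ring
  -- positivity of the tail probabilities of σ
  have hσpos : ∀ j : ℕ, 0 < P {ω | (j : ℕ∞) < σ ω} := by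
    intro j
    by_contra h
    push_neg at h
    have h0 : P {ω | (j : ℕ∞) < σ ω} = 0 := le_antisymm h zero_le
    have hae : ∀ᵐ ω ∂P, σ ω ≤ (j : ℕ∞) := by
      rw [ae_iff]
      have : {ω | ¬ σ ω ≤ (j : ℕ∞)} = {ω | (j : ℕ∞) < σ ω} := by
        ext ω; simp [not_le]
      rw [this]; exact h0
    have hle : ∫⁻ ω, (σ ω : ℝ≥0∞) ∂P ≤ (j : ℝ≥0∞) := by
      calc ∫⁻ ω, (σ ω : ℝ≥0∞) ∂P ≤ ∫⁻ _, (j : ℝ≥0∞) ∂P := by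
            refine lintegral_mono_ae (hae.mono fun ω hω => ?_)
            exact_mod_cast ENat.toENNReal_le.2 hω
        _ = (j : ℝ≥0∞) := by simp
    rw [hσdef, hTset] at hle
    rw [hEσ] at hle
    exact (ENNReal.natCast_ne_top j) (top_le_iff.1 hle)
  constructor
  · -- part 1
    intro j
    set c := P {ω | (j : ℕ∞) < σ ω} with hc
    have hcpos := hσpos j
    have hcne : c ≠ ⊤ := measure_ne_top _ _
    have hhalf : (0 : ℝ≥0∞) < c / 2 := ENNReal.div_pos hcpos.ne' (by norm_num)
    refine lt_of_lt_of_le hhalf ?_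
    refine le_liminf_of_le (by isBoundedDefault) ?_
    filter_upwards [key j (c/2) hhalf] with m hm
    have : c - c/2 ≤ P {ω | (j : ℕ∞) < hitTime (ARChain (αc m) (β m) ξ) (γ m • A) ω} :=
      tsub_le_iff_right.2 hm
    rwa [ENNReal.sub_half hcne] at this
  · -- part 2
    rw [ENNReal.tendsto_nhds_top_iff_nnreal]
    intro x
    have hsum : ∑' j : ℕ, P {ω | (j : ℕ∞) < σ ω} = ⊤ := by
      rw [← lintegral_enat P σ hσmeas]
      rw [hσdef, hTset]
      exact hEσ
    have htend := ENNReal.tendsto_nat_tsum (fun j => P {ω | (j : ℕ∞) < σ ω})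
    rw [hsum] at htend
    obtain ⟨J, hJ⟩ := (htend.eventually
      (lt_mem_nhds (show (x : ℝ≥0∞) + 1 < ⊤ by simp))).exists
    set η : ℝ≥0∞ := ((J : ℝ≥0∞) + 1)⁻¹ with hηdef
    have hηpos : 0 < η := ENNReal.inv_pos.2 (by simp)
    have hkeyJ : ∀ᶠ m in atTop, ∀ j ∈ Finset.range J,
        P {ω | (j : ℕ∞) < σ ω}
          ≤ P {ω | (j : ℕ∞) < hitTime (ARChain (αc m) (β m) ξ) (γ m • A) ω} + η :=
      (eventually_all_finset (Finset.range J)).2 (fun j _ => key j η hηpos)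
    filter_upwards [hkeyJ] with m hm
    have hsum1 : ∑ j ∈ Finset.range J, P {ω | (j : ℕ∞) < σ ω}
        ≤ (∑ j ∈ Finset.range J,
            P {ω | (j : ℕ∞) < hitTime (ARChain (αc m) (β m) ξ) (γ m • A) ω}) + (J : ℝ≥0∞) * η := by
      calc ∑ j ∈ Finset.range J, P {ω | (j : ℕ∞) < σ ω}
          ≤ ∑ j ∈ Finset.range J,
            (P {ω | (j : ℕ∞) < hitTime (ARChain (αc m) (β m) ξ) (γ m • A) ω} + η) :=
            Finset.sum_le_sum hm
        _ = (∑ j ∈ Finset.range J,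
            P {ω | (j : ℕ∞) < hitTime (ARChain (αc m) (β m) ξ) (γ m • A) ω}) + (J : ℝ≥0∞) * η := by
            rw [Finset.sum_add_distrib, Finset.sum_const, Finset.card_range, nsmul_eq_mul]
    have hJη : (J : ℝ≥0∞) * η ≤ 1 := by
      rw [hηdef]
      calc (J : ℝ≥0∞) * ((J : ℝ≥0∞) + 1)⁻¹ ≤ ((J : ℝ≥0∞) + 1) * ((J : ℝ≥0∞) + 1)⁻¹ :=
            mul_le_mul_left le_self_add _
        _ = 1 := ENNReal.mul_inv_cancel (by simp) (by simp)
    have h2 : (x : ℝ≥0∞) + 1 < (∑ j ∈ Finset.range J,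
        P {ω | (j : ℕ∞) < hitTime (ARChain (αc m) (β m) ξ) (γ m • A) ω}) + 1 :=
      lt_of_lt_of_le hJ (hsum1.trans (add_le_add_right hJη _))
    have hx : (x : ℝ≥0∞) < ∑ j ∈ Finset.range J,
        P {ω | (j : ℕ∞) < hitTime (ARChain (αc m) (β m) ξ) (γ m • A) ω} :=
      (ENNReal.add_lt_add_iff_right (by norm_num)).1 h2
    calc (x : ℝ≥0∞) < ∑ j ∈ Finset.range J,
          P {ω | (j : ℕ∞) < hitTime (ARChain (αc m) (β m) ξ) (γ m • A) ω} := hx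
      _ ≤ ∑' j : ℕ, P {ω | (j : ℕ∞) < hitTime (ARChain (αc m) (β m) ξ) (γ m • A) ω} :=
          ENNReal.sum_le_tsum _
      _ = ∫⁻ ω, (hitTime (ARChain (αc m) (β m) ξ) (γ m • A) ω : ℝ≥0∞) ∂P :=
          (lintegral_enat P _ (hτmeas m)).symm

end
end

section
/- Let m be fixed (with the standing assumptions in force so that Y^{(m)} and τ^{(m)} are well defined and 𝔼τ^{(m)} < ∞) and assume 𝔼‖ξ‖^k < ∞ for some k ∈ ℕ. Then for all u ∈ ℝ^d: 𝔼 |⟨u, Y^{(m)}⟩|^k 𝟙{Y^{(m)} ∈ γ_m A} ≤ ‖u‖^k (1 + r̄^k/r̲^k) β_m^k · 𝔼‖ξ‖^k / 𝔼τ^{(m)}. -/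
open MeasureTheory ProbabilityTheory Filter Set
open scoped ENNReal NNReal Topology Pointwise RealInnerProductSpace Classical

noncomputable section

/-- The stationary distribution `π(·) = (1/𝔼τ) 𝔼 ∑_{j≥1} 𝟙{X_j ∈ ·} 𝟙{τ ≥ j}`. -/
def statMeasure {Ω E : Type*} [MeasurableSpace Ω] [MeasurableSpace E]
    (P : Measure Ω) (X : ℕ → Ω → E) (τ : Ω → ℕ∞) : Measure E :=
  (∫⁻ ω, (τ ω : ℝ≥0∞) ∂P)⁻¹ •
    Measure.sum (fun j : ℕ =>
      if 1 ≤ j then (P.restrict {ω | (j : ℕ∞) ≤ τ ω}).map (X j) else 0)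

lemma hitTime_le' {Ω E : Type*} (X : ℕ → Ω → E) (S : Set E) (ω : Ω) {t : ℕ}
    (ht1 : 1 ≤ t) (h : X t ω ∈ S) : hitTime X S ω ≤ (t : ℕ∞) :=
  sInf_le ⟨t, rfl, ht1, h⟩

lemma le_hitTime_iff' {Ω E : Type*} (X : ℕ → Ω → E) (S : Set E) (ω : Ω) (j : ℕ) :
    (j : ℕ∞) ≤ hitTime X S ω ↔ ∀ t : ℕ, 1 ≤ t → t < j → X t ω ∉ S := by
  constructor
  · intro h t ht1 htj hmem
    have h1 : hitTime X S ω ≤ (t : ℕ∞) := hitTime_le' X S ω ht1 hmem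
    have h2 : (j : ℕ∞) ≤ (t : ℕ∞) := le_trans h h1
    exact absurd (Nat.cast_le.mp h2) (not_le.mpr htj)
  · intro h
    apply le_sInf
    rintro n ⟨t, rfl, ht1, hmem⟩
    have : ¬ t < j := fun htj => h t ht1 htj hmem
    exact_mod_cast not_lt.mp this

lemma one_le_hitTime {Ω E : Type*} (X : ℕ → Ω → E) (S : Set E) (ω : Ω) :
    (1 : ℕ∞) ≤ hitTime X S ω := by
  have := (le_hitTime_iff' X S ω 1).mpr
    (fun t ht1 ht2 _ => absurd (lt_of_le_of_lt ht1 ht2) (lt_irrefl 1))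
  exact_mod_cast this

/-- Lemma 1: if `𝔼‖ξ‖^k < ∞`, then for all `u`,
`𝔼 |⟨u,Y^{(m)}⟩|^k 𝟙{Y^{(m)} ∈ γ_m A} ≤ ‖u‖^k (1 + r̄^k/r̲^k) β_m^k 𝔼‖ξ‖^k / 𝔼τ^{(m)}`. -/
theorem statement9
    {Ω : Type*} [MeasurableSpace Ω] (P : Measure Ω) [IsProbabilityMeasure P]
    (d : ℕ) (hd : 0 < d)
    (α : ℕ → Ω → ℝ) (β : ℝ) (hβ : 0 < β)
    (ξ : ℕ → Ω → EuclideanSpace ℝ (Fin d))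
    (hαmeas : ∀ t, Measurable (α t)) (hξmeas : ∀ t, Measurable (ξ t))
    (hαpos : ∀ t, ∀ᵐ ω ∂P, 0 < α t ω)
    (hindep : iIndepFun (fun t ω => (α t ω, ξ t ω)) P)
    (hpair : ∀ t, IndepFun (α t) (ξ t) P)
    (hidα : ∀ t, IdentDistrib (α t) (α 1) P P)
    (hidξ : ∀ t, IdentDistrib (ξ t) (ξ 1) P P)
    (A : Set (EuclideanSpace ℝ (Fin d))) (hA : MeasurableSet A)
    (r₁ r₂ : ℝ) (hr₁ : 0 < r₁) (hr₁₂ : r₁ ≤ r₂)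
    (hAsub : Metric.ball (0 : EuclideanSpace ℝ (Fin d)) r₁ ⊆ A)
    (hAsup : A ⊆ Metric.ball (0 : EuclideanSpace ℝ (Fin d)) r₂)
    (γ : ℝ) (hγ : 0 < γ)
    -- standing assumptions
    (hαint : Integrable (α 1) P)
    (hαIco : 0 < P {ω | α 1 ω ∈ Set.Ico ((d : ℝ) / ((d : ℝ) + 1)) 1})
    (hαmean : ∫ ω, α 1 ω ∂P < 1)
    (hξint : Integrable (ξ 1) P) (hξmean : ∫ ω, ξ 1 ω ∂P = 0)
    (hξsq : Integrable (fun ω => ‖ξ 1 ω‖ ^ 2) P)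
    (hfullrank : (Matrix.of fun i j : Fin d => ∫ ω, ξ 1 ω i * ξ 1 ω j ∂P).det ≠ 0)
    -- 𝔼 τ^{(m)} < ∞
    (hτfin : ∫⁻ ω, (hitTime (ARChain α β ξ) (γ • A) ω : ℝ≥0∞) ∂P ≠ ⊤)
    -- Y^{(m)} has the stationary distribution π^{(m)} of the restarted chain
    (Y : Ω → EuclideanSpace ℝ (Fin d)) (hYmeas : Measurable Y)
    (hYlaw : P.map Y =
      statMeasure P (ARChain α β ξ) (hitTime (ARChain α β ξ) (γ • A)))
    -- the moment assumption
    (k : ℕ) (hξk : Integrable (fun ω => ‖ξ 1 ω‖ ^ k) P) :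
    ∀ u : EuclideanSpace ℝ (Fin d),
      (∫ ω, if Y ω ∈ γ • A then |⟪u, Y ω⟫| ^ k else 0 ∂P) ≤
        ‖u‖ ^ k * (1 + r₂ ^ k / r₁ ^ k) * β ^ k *
          (∫ ω, ‖ξ 1 ω‖ ^ k ∂P) /
          (∫⁻ ω, (hitTime (ARChain α β ξ) (γ • A) ω : ℝ≥0∞) ∂P).toReal := by
  intro u
  have hγne : γ ≠ 0 := ne_of_gt hγ
  have hr₂ : 0 < r₂ := lt_of_lt_of_le hr₁ hr₁₂
  set X : ℕ → Ω → EuclideanSpace ℝ (Fin d) := ARChain α β ξ with hXdef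
  set S : Set (EuclideanSpace ℝ (Fin d)) := γ • A with hSdef
  set τ : Ω → ℕ∞ := hitTime X S with hτdef
  -- basic facts about S
  have hSmeas : MeasurableSet S := by
    have hEq : S = (fun x : EuclideanSpace ℝ (Fin d) => γ⁻¹ • x) ⁻¹' A := by
      ext x
      simp [hSdef, Set.mem_smul_set_iff_inv_smul_mem₀ hγne]
    rw [hEq]
    exact hA.preimage (measurable_const_smul _)
  have hSnorm : ∀ x ∈ S, ‖x‖ ≤ γ * r₂ := by
    rintro x ⟨a, ha, rfl⟩
    have : ‖a‖ < r₂ := by simpa [Metric.mem_ball] using hAsup ha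
    calc ‖γ • a‖ = |γ| * ‖a‖ := by rw [norm_smul]; rfl
    _ ≤ γ * r₂ := by
        rw [abs_of_pos hγ]
        exact mul_le_mul_of_nonneg_left this.le hγ.le
  have hball : ∀ x : EuclideanSpace ℝ (Fin d), ‖x‖ < γ * r₁ → x ∈ S := by
    intro x hx
    refine ⟨γ⁻¹ • x, hAsub ?_, smul_inv_smul₀ hγne x⟩
    rw [Metric.mem_ball, dist_zero_right, norm_smul, norm_inv, Real.norm_eq_abs,
      abs_of_pos hγ]
    calc γ⁻¹ * ‖x‖ < γ⁻¹ * (γ * r₁) := by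
          exact mul_lt_mul_of_pos_left hx (inv_pos.mpr hγ)
    _ = r₁ := by field_simp
  -- measurability of the chain
  have hXmeas : ∀ t, Measurable (X t) := by
    intro t
    induction t with
    | zero => exact measurable_const
    | succ n ih =>
      exact ((hαmeas (n+1)).smul ih).add ((hξmeas (n+1)).const_smul β)
  -- f and g
  set f : EuclideanSpace ℝ (Fin d) → ℝ := fun x => if x ∈ S then |⟪u, x⟫| ^ k else 0
    with hfdef
  have hfmeas : Measurable f :=
    Measurable.ite hSmeas (((measurable_const.inner measurable_id).abs).pow_const k)
      measurable_const
  have hf0 : ∀ x, 0 ≤ f x := by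
    intro x
    simp only [hfdef]
    split
    · positivity
    · exact le_refl 0
  set g : EuclideanSpace ℝ (Fin d) → ℝ≥0∞ := fun x => ENNReal.ofReal (f x) with hgdef
  have hgmeas : Measurable g := hfmeas.ennreal_ofReal
  -- the normalizing constant
  set T : ℝ≥0∞ := ∫⁻ ω, (τ ω : ℝ≥0∞) ∂P with hTdef
  have hT1 : (1 : ℝ≥0∞) ≤ T := by
    calc (1 : ℝ≥0∞) = ∫⁻ _, 1 ∂P := by simp
    _ ≤ T := lintegral_mono fun ω => by
        rw [← ENat.toENNReal_one]
        exact ENat.toENNReal_le.mpr (one_le_hitTime X S ω)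
  have hT0 : T ≠ 0 := (lt_of_lt_of_le zero_lt_one hT1).ne'
  -- measurability of the level sets of the hitting time
  have hTsetEq : ∀ j : ℕ, {ω | (j : ℕ∞) ≤ τ ω} = ⋂ t ∈ Finset.Ico 1 j, (X t) ⁻¹' Sᶜ := by
    intro j
    ext ω
    simp only [Set.mem_setOf_eq, Set.mem_iInter, Finset.mem_Ico, Set.mem_preimage,
      Set.mem_compl_iff, hτdef, le_hitTime_iff' X S ω j]
    constructor
    · intro h t ht
      exact h t ht.1 ht.2
    · intro h t ht1 htj
      exact h t ⟨ht1, htj⟩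
  have hTsetMeas : ∀ j : ℕ, MeasurableSet {ω | (j : ℕ∞) ≤ τ ω} := by
    intro j
    rw [hTsetEq j]
    exact Finset.measurableSet_biInter _ fun t _ => (hXmeas t) hSmeas.compl
  -- the disjoint hit events
  set Ej : ℕ → Set Ω := fun j => {ω | (j : ℕ∞) ≤ τ ω} ∩ (X j) ⁻¹' S with hEdef
  have hEmeas : ∀ j, MeasurableSet (Ej j) := fun j => (hTsetMeas j).inter ((hXmeas j) hSmeas)
  have hEdisj : ∀ i j : ℕ, 1 ≤ i → i < j → Disjoint (Ej i) (Ej j) := by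
    intro i j hi hij
    rw [Set.disjoint_left]
    rintro ω ⟨hi', hXi⟩ ⟨hj', -⟩
    have h1 : τ ω ≤ (i : ℕ∞) := hitTime_le' X S ω hi hXi
    have h2 : (j : ℕ∞) ≤ (i : ℕ∞) := le_trans hj' h1
    exact absurd (Nat.cast_le.mp h2) (not_le.mpr hij)
  have hEsub : ∀ n : ℕ, Ej (n + 2) ⊆ (X 1) ⁻¹' Sᶜ := by
    intro n ω hω
    exact (le_hitTime_iff' X S ω (n + 2)).mp hω.1 1 le_rfl (by omega)
  -- the chain at time one
  have hX1 : ∀ ω, X 1 ω = β • ξ 1 ω := by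
    intro ω
    show ARChain α β ξ 1 ω = β • ξ 1 ω
    simp [ARChain]
  -- ξ-moment quantities
  set J : ℝ≥0∞ := ∫⁻ ω, ENNReal.ofReal (‖ξ 1 ω‖ ^ k) ∂P with hJdef
  have hJmeas : Measurable fun ω => ENNReal.ofReal (‖ξ 1 ω‖ ^ k) :=
    (((hξmeas 1).norm).pow_const k).ennreal_ofReal
  have hJeq : J = ENNReal.ofReal (∫ ω, ‖ξ 1 ω‖ ^ k ∂P) :=
    (ofReal_integral_eq_lintegral_ofReal hξk
      (Filter.Eventually.of_forall fun ω => by positivity)).symm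
  -- Markov bound for leaving γ•A at time one
  have hMarkov : P ((X 1) ⁻¹' Sᶜ) ≤ ENNReal.ofReal ((β / (γ * r₁)) ^ k) * J := by
    have hmb : MeasurableSet ((X 1) ⁻¹' Sᶜ) := (hXmeas 1) hSmeas.compl
    rw [← lintegral_indicator_one hmb, hJdef, ← lintegral_const_mul _ hJmeas]
    refine lintegral_mono fun ω => ?_
    by_cases hω : ω ∈ (X 1) ⁻¹' Sᶜ
    · rw [Set.indicator_of_mem hω]
      have hnorm : γ * r₁ ≤ β * ‖ξ 1 ω‖ := by
        by_contra hc
        push_neg at hc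
        refine hω (hball _ ?_)
        rw [hX1 ω, norm_smul, Real.norm_eq_abs, abs_of_pos hβ]
        exact hc
      have h1 : (1 : ℝ) ≤ (β / (γ * r₁)) ^ k * ‖ξ 1 ω‖ ^ k := by
        rw [← mul_pow]
        apply one_le_pow₀
        rw [div_mul_eq_mul_div, le_div_iff₀ (by positivity)]
        linarith
      calc (1 : ℝ≥0∞) = ENNReal.ofReal 1 := by simp
      _ ≤ ENNReal.ofReal ((β / (γ * r₁)) ^ k * ‖ξ 1 ω‖ ^ k) := ENNReal.ofReal_le_ofReal h1
      _ = ENNReal.ofReal ((β / (γ * r₁)) ^ k) * ENNReal.ofReal (‖ξ 1 ω‖ ^ k) :=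
          ENNReal.ofReal_mul (by positivity)
    · rw [Set.indicator_of_notMem hω]
      exact zero_le
  -- the measures in the stationary decomposition
  set μs : ℕ → Measure (EuclideanSpace ℝ (Fin d)) := fun j =>
    if 1 ≤ j then (P.restrict {ω | (j : ℕ∞) ≤ τ ω}).map (X j) else 0 with hμdef
  set Lfun : ℕ → ℝ≥0∞ := fun j => ∫⁻ x, g x ∂(μs j) with hLfdef
  have hLrw : ∀ j : ℕ, 1 ≤ j →
      Lfun j = ∫⁻ ω in {ω | (j : ℕ∞) ≤ τ ω}, g (X j ω) ∂P := by
    intro j hj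
    show (∫⁻ x, g x ∂(μs j)) = _
    rw [hμdef]
    simp only [if_pos hj]
    exact lintegral_map hgmeas (hXmeas j)
  -- rewrite the LHS
  have hLHS : (∫ ω, (if Y ω ∈ S then |⟪u, Y ω⟫| ^ k else 0) ∂P)
      = (T⁻¹ * ∑' j, Lfun j).toReal := by
    have h1 : (∫ ω, (if Y ω ∈ S then |⟪u, Y ω⟫| ^ k else 0) ∂P) = ∫ ω, f (Y ω) ∂P := rfl
    rw [h1, integral_eq_lintegral_of_nonneg_ae
      (Filter.Eventually.of_forall fun ω => hf0 (Y ω))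
      ((hfmeas.comp hYmeas).aestronglyMeasurable)]
    congr 1
    have h3 : ∫⁻ ω, ENNReal.ofReal (f (Y ω)) ∂P = ∫⁻ x, g x ∂(P.map Y) :=
      (lintegral_map hgmeas hYmeas).symm
    rw [h3, hYlaw]
    have h2 : statMeasure P X τ = (T⁻¹ : ℝ≥0∞) • Measure.sum μs := rfl
    rw [h2, lintegral_smul_measure, lintegral_sum_measure]
    rfl
  -- bound on the first term
  have hL1 : Lfun 1 ≤ ENNReal.ofReal (‖u‖ ^ k * β ^ k) * J := by
    rw [hLrw 1 le_rfl]
    have hrest : ∫⁻ ω in {ω | ((1 : ℕ) : ℕ∞) ≤ τ ω}, g (X 1 ω) ∂P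
        ≤ ∫⁻ ω, g (X 1 ω) ∂P := lintegral_mono' Measure.restrict_le_self le_rfl
    refine le_trans hrest ?_
    have hpt : ∀ ω, g (X 1 ω)
        ≤ ENNReal.ofReal (‖u‖ ^ k * β ^ k) * ENNReal.ofReal (‖ξ 1 ω‖ ^ k) := by
      intro ω
      rw [← ENNReal.ofReal_mul (by positivity)]
      apply ENNReal.ofReal_le_ofReal
      show f (X 1 ω) ≤ _
      simp only [hfdef]
      split
      · rw [hX1 ω, real_inner_smul_right]
        calc |β * ⟪u, ξ 1 ω⟫| ^ k = (β * |⟪u, ξ 1 ω⟫|) ^ k := by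
              rw [abs_mul, abs_of_pos hβ]
        _ ≤ (β * (‖u‖ * ‖ξ 1 ω‖)) ^ k := by
              apply pow_le_pow_left₀ (by positivity)
              exact mul_le_mul_of_nonneg_left (abs_real_inner_le_norm u (ξ 1 ω)) hβ.le
        _ = ‖u‖ ^ k * β ^ k * ‖ξ 1 ω‖ ^ k := by ring
      · positivity
    calc ∫⁻ ω, g (X 1 ω) ∂P
        ≤ ∫⁻ ω, ENNReal.ofReal (‖u‖ ^ k * β ^ k) * ENNReal.ofReal (‖ξ 1 ω‖ ^ k) ∂P :=
          lintegral_mono hpt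
    _ = ENNReal.ofReal (‖u‖ ^ k * β ^ k) * J := by
        rw [hJdef, ← lintegral_const_mul _ hJmeas]
  -- bound on the later terms
  have hLj : ∀ n : ℕ, Lfun (n + 2)
      ≤ ENNReal.ofReal ((‖u‖ * (γ * r₂)) ^ k) * P (Ej (n + 2)) := by
    intro n
    rw [hLrw (n + 2) (by omega)]
    have hpt : ∀ ω, g (X (n + 2) ω)
        ≤ ((X (n + 2)) ⁻¹' S).indicator
            (fun _ => ENNReal.ofReal ((‖u‖ * (γ * r₂)) ^ k)) ω := by
      intro ω
      by_cases hmem : X (n + 2) ω ∈ S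
      · rw [Set.indicator_of_mem (show ω ∈ (X (n + 2)) ⁻¹' S from hmem)]
        apply ENNReal.ofReal_le_ofReal
        show f (X (n + 2) ω) ≤ _
        simp only [hfdef, if_pos hmem]
        apply pow_le_pow_left₀ (abs_nonneg _)
        calc |⟪u, X (n + 2) ω⟫| ≤ ‖u‖ * ‖X (n + 2) ω‖ := abs_real_inner_le_norm _ _
        _ ≤ ‖u‖ * (γ * r₂) :=
            mul_le_mul_of_nonneg_left (hSnorm _ hmem) (norm_nonneg u)
      · rw [Set.indicator_of_notMem (show ω ∉ (X (n + 2)) ⁻¹' S from hmem)]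
        show ENNReal.ofReal (f (X (n + 2) ω)) ≤ 0
        simp only [hfdef, if_neg hmem]
        simp
    refine le_trans (lintegral_mono hpt) ?_
    rw [lintegral_indicator ((hXmeas (n + 2)) hSmeas), setLIntegral_const,
      Measure.restrict_apply ((hXmeas (n + 2)) hSmeas), Set.inter_comm]
  -- summing the later terms
  have htail : ∑' n : ℕ, Lfun (n + 2)
      ≤ ENNReal.ofReal (‖u‖ ^ k * β ^ k * (r₂ ^ k / r₁ ^ k)) * J := by
    have hpd : Pairwise (Function.onFun Disjoint fun n => Ej (n + 2)) := by
      intro m n hmn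
      rcases lt_or_gt_of_ne hmn with h | h
      · exact hEdisj (m + 2) (n + 2) (by omega) (by omega)
      · exact (hEdisj (n + 2) (m + 2) (by omega) (by omega)).symm
    have hconst : (‖u‖ * (γ * r₂)) ^ k * (β / (γ * r₁)) ^ k
        = ‖u‖ ^ k * β ^ k * (r₂ ^ k / r₁ ^ k) := by
      have hr₁ne : r₁ ≠ 0 := ne_of_gt hr₁
      have hbase : ‖u‖ * (γ * r₂) * (β / (γ * r₁)) = ‖u‖ * β * (r₂ / r₁) := by
        field_simp
      rw [← mul_pow, hbase, mul_pow, mul_pow, div_pow]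
    calc ∑' n : ℕ, Lfun (n + 2)
        ≤ ∑' n : ℕ, ENNReal.ofReal ((‖u‖ * (γ * r₂)) ^ k) * P (Ej (n + 2)) :=
          ENNReal.tsum_le_tsum fun n => hLj n
    _ = ENNReal.ofReal ((‖u‖ * (γ * r₂)) ^ k) * ∑' n : ℕ, P (Ej (n + 2)) :=
          ENNReal.tsum_mul_left
    _ = ENNReal.ofReal ((‖u‖ * (γ * r₂)) ^ k) * P (⋃ n, Ej (n + 2)) := by
          rw [measure_iUnion hpd fun n => hEmeas (n + 2)]
    _ ≤ ENNReal.ofReal ((‖u‖ * (γ * r₂)) ^ k) * P ((X 1) ⁻¹' Sᶜ) := by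
          gcongr
          exact Set.iUnion_subset hEsub
    _ ≤ ENNReal.ofReal ((‖u‖ * (γ * r₂)) ^ k) * (ENNReal.ofReal ((β / (γ * r₁)) ^ k) * J) :=
          mul_le_mul_right hMarkov _
    _ = ENNReal.ofReal (‖u‖ ^ k * β ^ k * (r₂ ^ k / r₁ ^ k)) * J := by
          rw [← mul_assoc,
            ← ENNReal.ofReal_mul (p := (‖u‖ * (γ * r₂)) ^ k) (by positivity), hconst]
  -- total bound on the sum
  have hI0 : 0 ≤ ∫ ω, ‖ξ 1 ω‖ ^ k ∂P := integral_nonneg fun ω => by positivity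
  have hsum : (∑' j, Lfun j)
      ≤ ENNReal.ofReal (‖u‖ ^ k * (1 + r₂ ^ k / r₁ ^ k) * β ^ k * ∫ ω, ‖ξ 1 ω‖ ^ k ∂P) := by
    have h0 : Lfun 0 = 0 := by
      show (∫⁻ x, g x ∂(μs 0)) = 0
      rw [hμdef]
      simp
    have hdecomp : (∑' j, Lfun j) = Lfun 0 + (Lfun 1 + ∑' n : ℕ, Lfun (n + 2)) := by
      rw [tsum_eq_zero_add' ENNReal.summable]
      congr 1
      rw [tsum_eq_zero_add' ENNReal.summable]
    rw [hdecomp, h0, zero_add]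
    calc Lfun 1 + ∑' n : ℕ, Lfun (n + 2)
        ≤ ENNReal.ofReal (‖u‖ ^ k * β ^ k) * J
          + ENNReal.ofReal (‖u‖ ^ k * β ^ k * (r₂ ^ k / r₁ ^ k)) * J :=
          add_le_add hL1 htail
    _ = ENNReal.ofReal (‖u‖ ^ k * β ^ k + ‖u‖ ^ k * β ^ k * (r₂ ^ k / r₁ ^ k)) * J := by
          rw [ENNReal.ofReal_add (by positivity) (by positivity), add_mul]
    _ = ENNReal.ofReal ((‖u‖ ^ k * β ^ k + ‖u‖ ^ k * β ^ k * (r₂ ^ k / r₁ ^ k))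
          * ∫ ω, ‖ξ 1 ω‖ ^ k ∂P) := by
          rw [hJeq, ← ENNReal.ofReal_mul (by positivity)]
    _ = ENNReal.ofReal (‖u‖ ^ k * (1 + r₂ ^ k / r₁ ^ k) * β ^ k * ∫ ω, ‖ξ 1 ω‖ ^ k ∂P) := by
          congr 1
          ring
  -- conclusion
  have hN0 : 0 ≤ ‖u‖ ^ k * (1 + r₂ ^ k / r₁ ^ k) * β ^ k * ∫ ω, ‖ξ 1 ω‖ ^ k ∂P :=
    mul_nonneg (by positivity) hI0
  have hfin : T⁻¹ * ENNReal.ofReal (‖u‖ ^ k * (1 + r₂ ^ k / r₁ ^ k) * β ^ k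
      * ∫ ω, ‖ξ 1 ω‖ ^ k ∂P) ≠ ⊤ :=
    ENNReal.mul_ne_top (ENNReal.inv_ne_top.mpr hT0) ENNReal.ofReal_ne_top
  rw [hLHS]
  calc (T⁻¹ * ∑' j, Lfun j).toReal
      ≤ (T⁻¹ * ENNReal.ofReal (‖u‖ ^ k * (1 + r₂ ^ k / r₁ ^ k) * β ^ k
          * ∫ ω, ‖ξ 1 ω‖ ^ k ∂P)).toReal :=
        ENNReal.toReal_mono hfin (mul_le_mul_right hsum _)
  _ = ‖u‖ ^ k * (1 + r₂ ^ k / r₁ ^ k) * β ^ k * (∫ ω, ‖ξ 1 ω‖ ^ k ∂P) / T.toReal := by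
        rw [ENNReal.toReal_mul, ENNReal.toReal_inv, ENNReal.toReal_ofReal hN0,
          inv_mul_eq_div]


end
end

section
/- Let ξ be a random vector in ℝ^d with 𝔼ξ = 0 such that 𝔼ξξᵀ exists and is regular (full rank), and let α be a positive random variable with ℙ(α ∈ [d/(d+1),1)) > 0. Let {α_t}_{t≥1} and {ξ_t}_{t≥1} be i.i.d. copies of α and ξ respectively (all independent), β > 0, and define Z_{t+1} = α_{t+1} Z_t + β ξ_{t+1} for t ≥ 0 with initial value Z_0. Then for every γ > 0 and every R > γ there exists an integer L > 0 such that inf_{x ∈ B^d(0,R)} ℙ( ‖Z_t‖ ≤ γ for some t ≤ L | Z_0 = x ) > 0. -/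
open MeasureTheory ProbabilityTheory Filter Set
open scoped ENNReal NNReal Topology Pointwise Classical

noncomputable section


lemma aux_null_nonsupport {X : Type*} [MetricSpace X] [TopologicalSpace.SeparableSpace X]
    [MeasurableSpace X] (μ : Measure X) :
    μ {x | ¬ ∀ ρ : ℝ, 0 < ρ → 0 < μ (Metric.ball x ρ)} = 0 := by
  obtain ⟨D, hDc, hDd⟩ := TopologicalSpace.exists_countable_dense X
  set N : X → ℚ → Set X := fun z q => if μ (Metric.ball z (q:ℝ)) = 0 then Metric.ball z (q:ℝ) else ∅ with hN
  have hNnull : ∀ z q, μ (N z q) = 0 := by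
    intro z q
    by_cases h : μ (Metric.ball z (q:ℝ)) = 0 <;> simp [hN, h]
  have hsub : {x | ¬ ∀ ρ : ℝ, 0 < ρ → 0 < μ (Metric.ball x ρ)} ⊆ ⋃ z ∈ D, ⋃ q : ℚ, N z q := by
    intro x hx
    push_neg at hx
    obtain ⟨ρ, hρ, hball⟩ := hx
    have hball0 : μ (Metric.ball x ρ) = 0 := le_antisymm hball zero_le
    obtain ⟨z, hzD, hz⟩ := Metric.mem_closure_iff.mp (hDd x) (ρ/4) (by linarith)
    obtain ⟨q, hq1, hq2⟩ := exists_rat_btwn (show ρ/4 < ρ/2 by linarith)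
    have hge : dist x z < (q:ℝ) := lt_trans hz hq1
    have hsub2 : Metric.ball z (q:ℝ) ⊆ Metric.ball x ρ := by
      intro y hy
      have : dist y z < (q:ℝ) := hy
      have : dist y x ≤ dist y z + dist z x := dist_triangle _ _ _
      rw [dist_comm z x] at this
      simp only [Metric.mem_ball]
      have hzx : dist x z < ρ/4 := hz
      calc dist y x ≤ dist y z + dist z x := dist_triangle y z x
        _ = dist y z + dist x z := by rw [dist_comm z x]
        _ < (q:ℝ) + ρ/4 := add_lt_add hy hz
        _ < ρ := by linarith
    have hnull : μ (Metric.ball z (q:ℝ)) = 0 := measure_mono_null hsub2 hball0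
    refine mem_biUnion hzD (mem_iUnion.mpr ⟨q, ?_⟩)
    simp only [hN, hnull, if_pos]
    exact Metric.mem_ball.mpr hge
  refine measure_mono_null hsub ?_
  refine (measure_biUnion_null_iff hDc).mpr ?_
  intro z _
  exact measure_iUnion_null fun q => hNnull z q

lemma aux_greedy (m T : ℕ) (hm : 0 < m) (u : ℝ) (hu0 : 0 < u) (hu1 : u < 1)
    (hum : (1 - u) * m ≤ 1) (lam : Fin m → ℝ) (hlam0 : ∀ i, 0 ≤ lam i)
    (hlam1 : ∑ i, lam i = 1) :
    ∃ g : ℕ → Fin m, ∀ i,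
      |(∑ k ∈ Finset.range T, if g k = i then u ^ k else 0)
        - lam i * ∑ k ∈ Finset.range T, u ^ k| ≤ m * u ^ T := by
  classical
  set S : ℝ := ∑ k ∈ Finset.range T, u ^ k with hS
  set τ : Fin m → ℝ := fun i => lam i * S with hτ
  have hselex : ∀ f : Fin m → ℝ, ∃ i, ∀ j, f j ≤ f i := by
    intro f
    obtain ⟨b, _, hb⟩ := Finset.exists_max_image Finset.univ f ⟨⟨0, hm⟩, Finset.mem_univ _⟩
    exact ⟨b, fun j => hb j (Finset.mem_univ j)⟩
  choose sel hsel using hselex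
  set A : ℕ → Fin m → ℝ := fun n => Nat.rec (fun _ => 0)
    (fun k Ak i => Ak i + if sel (fun j => τ j - Ak j) = i then u ^ k else 0) n with hA
  set g : ℕ → Fin m := fun k => sel (fun j => τ j - A k j) with hg
  have hstep : ∀ k i, A (k + 1) i = A k i + if g k = i then u ^ k else 0 := fun k i => rfl
  have hS0 : 0 ≤ S := Finset.sum_nonneg fun k _ => (pow_pos hu0 k).le
  have hτ0 : ∀ i, 0 ≤ τ i := fun i => mul_nonneg (hlam0 i) hS0
  have hτsum : ∑ i, τ i = S := by
    rw [hτ, ← Finset.sum_mul, hlam1, one_mul]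
  have hsum : ∀ k, ∑ i, A k i = ∑ j ∈ Finset.range k, u ^ j := by
    intro k
    induction k with
    | zero => simp [hA]
    | succ k ih =>
      simp only [hstep, Finset.sum_add_distrib, ih, Finset.sum_ite_eq, Finset.mem_univ, if_true,
        Finset.sum_range_succ]
  have hub : ∀ k, k ≤ T → ∀ i, A k i ≤ τ i + u ^ T := by
    intro k
    induction k with
    | zero =>
      intro _ i
      simp only [hA]
      have := pow_pos hu0 T
      have := hτ0 i
      simp
      nlinarith
    | succ k ih =>
      intro hkT i
      have hkT' : k ≤ T := Nat.le_of_succ_le hkT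
      have hdefsum : ∑ j, (τ j - A k j) = S - ∑ j ∈ Finset.range k, u ^ j := by
        rw [Finset.sum_sub_distrib, hτsum, hsum k]
      have hgeomtail : S - ∑ j ∈ Finset.range k, u ^ j = ∑ j ∈ Finset.Ico k T, u ^ j := by
        rw [hS, ← Finset.sum_Ico_eq_sub _ hkT']
      have htail : (1 - u) * (∑ j ∈ Finset.Ico k T, u ^ j) = u ^ k - u ^ T := by
        rw [Finset.sum_Ico_eq_sum_range]
        have : ∀ n : ℕ, (1 - u) * (∑ j ∈ Finset.range n, u ^ (k + j)) = u ^ k - u ^ (k + n) := by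
          intro n
          induction n with
          | zero => simp
          | succ n ih2 =>
            rw [Finset.sum_range_succ, mul_add, ih2, pow_add, pow_add, pow_succ]
            ring
        have hkk : k + (T - k) = T := by omega
        rw [this (T - k), hkk]
      -- max deficit bound
      have hmax : ∀ j, τ j - A k j ≤ τ (g k) - A k (g k) := hsel (fun j => τ j - A k j)
      have hsumle : ∑ j, (τ j - A k j) ≤ m * (τ (g k) - A k (g k)) := by
        calc ∑ j, (τ j - A k j) ≤ ∑ _j : Fin m, (τ (g k) - A k (g k)) :=
              Finset.sum_le_sum fun j _ => hmax j
          _ = m * (τ (g k) - A k (g k)) := by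
              rw [Finset.sum_const, Finset.card_univ, Fintype.card_fin, nsmul_eq_mul]
      have hmax0 : 0 ≤ τ (g k) - A k (g k) := by
        by_contra hneg
        push_neg at hneg
        have hmr : (0:ℝ) < m := Nat.cast_pos.mpr hm
        have : ∑ j, (τ j - A k j) < 0 := by nlinarith
        rw [hdefsum, hgeomtail] at this
        exact absurd this (not_lt.mpr (Finset.sum_nonneg fun j _ => (pow_pos hu0 j).le))
      have hkey : u ^ k - u ^ T ≤ τ (g k) - A k (g k) := by
        have h1 : (1 - u) * ∑ j, (τ j - A k j) ≤ (1 - u) * (m * (τ (g k) - A k (g k))) :=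
          mul_le_mul_of_nonneg_left hsumle (by linarith)
        rw [hdefsum, hgeomtail, htail] at h1
        nlinarith
      by_cases hi : g k = i
      · subst hi
        rw [hstep, if_pos rfl]
        linarith [hkey]
      · rw [hstep, if_neg hi, add_zero]
        exact ih hkT' i
  -- conclusion
  have hAg : ∀ k i, A k i = ∑ j ∈ Finset.range k, if g j = i then u ^ j else 0 := by
    intro k i
    induction k with
    | zero => simp [hA]
    | succ k ih => rw [hstep, Finset.sum_range_succ, ih]
  refine ⟨g, fun i => ?_⟩
  rw [← hAg]
  have hsumT : ∑ j, (A T j - τ j) = 0 := by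
    rw [Finset.sum_sub_distrib, hτsum, hsum T, hS, sub_self]
  have hub' : ∀ j, A T j - τ j ≤ u ^ T := fun j => by linarith [hub T le_rfl j]
  have hlow : -(m * u ^ T) ≤ A T i - τ i := by
    have h1 : A T i - τ i = -∑ j ∈ Finset.univ.erase i, (A T j - τ j) := by
      have h0 : (A T i - τ i) + ∑ j ∈ Finset.univ.erase i, (A T j - τ j) = 0 := by
        rw [Finset.add_sum_erase Finset.univ (fun j => A T j - τ j) (Finset.mem_univ i)]
        exact hsumT
      linarith
    have h2 : ∑ j ∈ Finset.univ.erase i, (A T j - τ j) ≤ ∑ _j ∈ Finset.univ.erase i, u ^ T :=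
      Finset.sum_le_sum fun j _ => hub' j
    have h3 : (∑ _j ∈ Finset.univ.erase i, u ^ T : ℝ) ≤ m * u ^ T := by
      rw [Finset.sum_const, nsmul_eq_mul]
      have hcard : ((Finset.univ.erase i).card : ℝ) ≤ m := by
        have := Finset.card_erase_le (s := (Finset.univ : Finset (Fin m))) (a := i)
        have : (Finset.univ.erase i).card ≤ m := by
          simpa [Finset.card_univ] using this
        exact_mod_cast this
      nlinarith [pow_pos hu0 T]
    linarith
  have hupp : A T i - τ i ≤ m * u ^ T := by
    have := hub' i
    have hm1 : (1:ℝ) ≤ m := by exact_mod_cast hm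
    nlinarith [pow_pos hu0 T]
  rw [abs_le]
  constructor <;> simp only [hτ] at hlow hupp <;> [linarith; linarith]

lemma aux_coord (d : ℕ) (x : EuclideanSpace ℝ (Fin d)) (i : Fin d) : |x i| ≤ ‖x‖ := by
  rw [EuclideanSpace.norm_eq]
  have h : x i ^ 2 ≤ ∑ j, x j ^ 2 :=
    Finset.single_le_sum (f := fun j => x j ^ 2) (fun j _ => sq_nonneg _) (Finset.mem_univ i)
  calc |x i| = Real.sqrt (x i ^ 2) := (Real.sqrt_sq_eq_abs _).symm
    _ ≤ Real.sqrt (∑ j, x j ^ 2) := Real.sqrt_le_sqrt h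
    _ = Real.sqrt (∑ j, ‖x j‖ ^ 2) := by simp [Real.norm_eq_abs, sq_abs]

lemma aux_dir (d : ℕ) {Ω : Type*} [MeasurableSpace Ω] (P : Measure Ω) [IsProbabilityMeasure P]
    (ξ1 : Ω → EuclideanSpace ℝ (Fin d)) (hmeas : Measurable ξ1) (hint : Integrable ξ1 P)
    (hmean : ∫ ω, ξ1 ω ∂P = 0) (hsq : Integrable (fun ω => ‖ξ1 ω‖ ^ 2) P)
    (hdet : (Matrix.of fun i j : Fin d => ∫ ω, ξ1 ω i * ξ1 ω j ∂P).det ≠ 0)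
    (v : EuclideanSpace ℝ (Fin d)) (hv : v ≠ 0) :
    0 < P {ω | 0 < inner (𝕜 := ℝ) v (ξ1 ω)} := by
  set Y : Ω → ℝ := fun ω => inner (𝕜 := ℝ) v (ξ1 ω) with hY
  have hYmeas : Measurable Y := by
    have : Continuous fun w : EuclideanSpace ℝ (Fin d) => inner (𝕜 := ℝ) v w :=
      continuous_const.inner continuous_id
    exact this.measurable.comp hmeas
  have hYint : Integrable Y P := hint.const_inner v
  have hYmean : ∫ ω, Y ω ∂P = 0 := by
    rw [hY]
    simp only []
    rw [integral_inner hint v, hmean, inner_zero_right]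
  rw [pos_iff_ne_zero]
  intro h0
  -- from P {0 < Y} = 0 deduce Y ≤ 0 a.e.
  have hae : ∀ᵐ ω ∂P, Y ω ≤ 0 := by
    have : ∀ᵐ ω ∂P, ¬ (0 < Y ω) := by
      rw [ae_iff]
      push_neg
      simpa using h0
    filter_upwards [this] with ω h using not_lt.mp h
  have hYzero : Y =ᵐ[P] 0 := by
    have hneg : 0 ≤ᵐ[P] fun ω => -Y ω := by
      filter_upwards [hae] with ω h
      simp only [Pi.zero_apply]
      linarith
    have hnegint : Integrable (fun ω => -Y ω) P := hYint.neg
    have hnegzero : ∫ ω, -Y ω ∂P = 0 := by rw [integral_neg, hYmean, neg_zero]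
    have := (integral_eq_zero_iff_of_nonneg_ae hneg hnegint).mp hnegzero
    filter_upwards [this] with ω h
    simpa using congrArg Neg.neg h
  -- integrability of coordinate products
  have hprodint : ∀ i j : Fin d, Integrable (fun ω => ξ1 ω i * ξ1 ω j) P := by
    intro i j
    refine hsq.mono' ?_ ?_
    · exact (((EuclideanSpace.proj i).continuous.measurable.comp hmeas).mul
        ((EuclideanSpace.proj j).continuous.measurable.comp hmeas)).aestronglyMeasurable
    · filter_upwards with ω
      have h1 := aux_coord d (ξ1 ω) i
      have h2 := aux_coord d (ξ1 ω) j
      have h3 : (0:ℝ) ≤ ‖ξ1 ω‖ := norm_nonneg _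
      calc ‖ξ1 ω i * ξ1 ω j‖ = |ξ1 ω i| * |ξ1 ω j| := by rw [Real.norm_eq_abs, abs_mul]
        _ ≤ ‖ξ1 ω‖ * ‖ξ1 ω‖ := mul_le_mul h1 h2 (abs_nonneg _) h3
        _ = ‖ξ1 ω‖ ^ 2 := (sq _).symm
  -- inner as sum of coordinates
  have hinner : ∀ ω, Y ω = ∑ j, v j * ξ1 ω j := by
    intro ω
    rw [hY]
    simp [PiLp.inner_apply, RCLike.inner_apply, conj_trivial]
    exact Finset.sum_congr rfl fun _ _ => mul_comm _ _
  set M : Matrix (Fin d) (Fin d) ℝ := Matrix.of fun i j : Fin d => ∫ ω, ξ1 ω i * ξ1 ω j ∂P with hM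
  have hMv : M.mulVec (fun j => v j) = 0 := by
    funext i
    have hzero : ∫ ω, ξ1 ω i * Y ω ∂P = 0 := by
      apply integral_eq_zero_of_ae
      filter_upwards [hYzero] with ω h
      simp [h]
    have hexpand : ∫ ω, ξ1 ω i * Y ω ∂P = ∑ j, v j * ∫ ω, ξ1 ω i * ξ1 ω j ∂P := by
      have : ∀ ω, ξ1 ω i * Y ω = ∑ j, v j * (ξ1 ω i * ξ1 ω j) := by
        intro ω
        rw [hinner ω, Finset.mul_sum]
        congr 1
        funext j
        ring
      rw [integral_congr_ae (Filter.Eventually.of_forall this)]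
      rw [integral_finset_sum]
      · congr 1
        funext j
        rw [integral_const_mul]
      · exact fun j _ => (hprodint i j).const_mul (v j)
    rw [hexpand] at hzero
    simp only [Matrix.mulVec, dotProduct, hM, Matrix.of_apply, Pi.zero_apply]
    rw [← hzero]
    congr 1
    funext j
    ring
  have hvzero : (fun j => v j) = (0 : Fin d → ℝ) := by
    have hunit : IsUnit M.det := isUnit_iff_ne_zero.mpr hdet
    have h1 : (M⁻¹ * M) = 1 := Matrix.nonsing_inv_mul M hunit
    calc (fun j => v j) = (1 : Matrix (Fin d) (Fin d) ℝ).mulVec (fun j => v j) :=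
          (Matrix.one_mulVec _).symm
      _ = (M⁻¹ * M).mulVec (fun j => v j) := by rw [h1]
      _ = M⁻¹.mulVec (M.mulVec (fun j => v j)) := (Matrix.mulVec_mulVec _ _ _).symm
      _ = M⁻¹.mulVec 0 := by rw [hMv]
      _ = 0 := Matrix.mulVec_zero _
  apply hv
  ext j
  simpa using congrFun hvzero j

lemma aux_hull (d : ℕ) (hd : 0 < d) (S : Set (EuclideanSpace ℝ (Fin d)))
    (hS : ∀ v : EuclideanSpace ℝ (Fin d), v ≠ 0 → ∃ z ∈ S, 0 < inner (𝕜 := ℝ) v z) :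
    (0 : EuclideanSpace ℝ (Fin d)) ∈ convexHull ℝ S := by
  classical
  have hKne : ∀ v ∈ Metric.sphere (0 : EuclideanSpace ℝ (Fin d)) 1, v ≠ 0 := by
    intro v hv h
    rw [mem_sphere_zero_iff_norm, h, norm_zero] at hv
    norm_num at hv
  choose z hzS hzpos using fun (v : Metric.sphere (0 : EuclideanSpace ℝ (Fin d)) 1) =>
    hS v.1 (hKne v.1 v.2)
  set U : Metric.sphere (0 : EuclideanSpace ℝ (Fin d)) 1 → Set (EuclideanSpace ℝ (Fin d)) :=
    fun v => {w | 0 < inner (𝕜 := ℝ) w (z v)} with hU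
  have hUopen : ∀ v, IsOpen (U v) := by
    intro v
    have hc : Continuous fun w : EuclideanSpace ℝ (Fin d) => inner (𝕜 := ℝ) w (z v) :=
      continuous_id.inner continuous_const
    exact isOpen_lt continuous_const hc
  have hcover : Metric.sphere (0 : EuclideanSpace ℝ (Fin d)) 1 ⊆ ⋃ v, U v := by
    intro w hw
    exact mem_iUnion.mpr ⟨⟨w, hw⟩, by simpa [hU] using hzpos ⟨w, hw⟩⟩
  obtain ⟨F, hF⟩ := (isCompact_sphere (0 : EuclideanSpace ℝ (Fin d)) 1).elim_finite_subcover
    U hUopen hcover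
  set t : Finset (EuclideanSpace ℝ (Fin d)) := F.image z with ht
  have htS : (t : Set (EuclideanSpace ℝ (Fin d))) ⊆ S := by
    intro x hx
    simp only [ht, Finset.coe_image, Set.mem_image, Finset.mem_coe] at hx
    obtain ⟨v, _, rfl⟩ := hx
    exact hzS v
  -- a unit vector exists
  have hw0 : ∃ w0 : EuclideanSpace ℝ (Fin d), w0 ∈ Metric.sphere (0 : EuclideanSpace ℝ (Fin d)) 1 := by
    refine ⟨EuclideanSpace.single (⟨0, hd⟩ : Fin d) (1 : ℝ), ?_⟩
    rw [mem_sphere_zero_iff_norm, EuclideanSpace.norm_single]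
    norm_num
  suffices h : (0 : EuclideanSpace ℝ (Fin d)) ∈ convexHull ℝ (t : Set (EuclideanSpace ℝ (Fin d))) from
    convexHull_mono htS h
  by_contra hcon
  obtain ⟨f, u, hfu, hu0⟩ := _root_.geometric_hahn_banach_closed_point
    (convex_convexHull ℝ _) ((t.finite_toSet).isClosed_convexHull (𝕜 := ℝ)) hcon
  rw [map_zero] at hu0
  set y := (InnerProductSpace.toDual ℝ (EuclideanSpace ℝ (Fin d))).symm f with hy
  have hyx : ∀ x, inner (𝕜 := ℝ) y x = f x := fun x =>
    InnerProductSpace.toDual_symm_apply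
  by_cases hy0 : y = 0
  · obtain ⟨w0, hw0mem⟩ := hw0
    obtain ⟨v, hvF, hv⟩ := Set.mem_iUnion₂.mp (hF hw0mem)
    have hz : z v ∈ convexHull ℝ (t : Set (EuclideanSpace ℝ (Fin d))) := by
      apply subset_convexHull
      simp only [ht, Finset.coe_image, Set.mem_image, Finset.mem_coe]
      exact ⟨v, hvF, rfl⟩
    have h1 : f (z v) < u := hfu _ hz
    have h2 : f (z v) = 0 := by rw [← hyx, hy0, inner_zero_left]
    linarith
  · have hyn : 0 < ‖y‖ := norm_pos_iff.mpr hy0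
    set w : EuclideanSpace ℝ (Fin d) := ‖y‖⁻¹ • y with hw
    have hwmem : w ∈ Metric.sphere (0 : EuclideanSpace ℝ (Fin d)) 1 := by
      rw [mem_sphere_zero_iff_norm, hw, norm_smul, norm_inv, norm_norm,
        inv_mul_cancel₀ (ne_of_gt hyn)]
    obtain ⟨v, hvF, hv⟩ := Set.mem_iUnion₂.mp (hF hwmem)
    have hvpos : 0 < inner (𝕜 := ℝ) w (z v) := hv
    have hypos : 0 < inner (𝕜 := ℝ) y (z v) := by
      rw [hw, real_inner_smul_left] at hvpos
      nlinarith [hvpos, inv_pos.mpr hyn]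
    have hz : z v ∈ convexHull ℝ (t : Set (EuclideanSpace ℝ (Fin d))) := by
      apply subset_convexHull
      simp only [ht, Finset.coe_image, Set.mem_image, Finset.mem_coe]
      exact ⟨v, hvF, rfl⟩
    have h1 : f (z v) < u := hfu _ hz
    rw [← hyx] at h1
    linarith


set_option maxHeartbeats 2000000 in


/-- Lemma A.1: for the AR(1) recursion `Z_{t+1} = α_{t+1} Z_t + β ξ_{t+1}`
with `𝔼ξ = 0`, `𝔼ξξᵀ` regular and `ℙ(α ∈ [d/(d+1),1)) > 0`, for every `γ > 0` and `R > γ`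
there is an integer `L > 0` such that the probability of hitting the ball `B(0,γ)` before
time `L` is bounded below, uniformly over all initial values `x ∈ B(0,R)`. -/
theorem statement14
    {Ω : Type*} [MeasurableSpace Ω] (P : Measure Ω) [IsProbabilityMeasure P]
    (d : ℕ) (hd : 0 < d)
    (α : ℕ → Ω → ℝ) (β : ℝ) (hβ : 0 < β)
    (ξ : ℕ → Ω → EuclideanSpace ℝ (Fin d))
    (hαmeas : ∀ t, Measurable (α t)) (hξmeas : ∀ t, Measurable (ξ t))
    -- α is a positive random variable with ℙ(α ∈ [d/(d+1),1)) > 0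
    (hαpos : ∀ t, ∀ᵐ ω ∂P, 0 < α t ω)
    (hαIco : 0 < P {ω | α 1 ω ∈ Set.Ico ((d : ℝ) / ((d : ℝ) + 1)) 1})
    -- i.i.d. structure: {(α_t, ξ_t)}_t independent, α_t ⊥ ξ_t, identically distributed
    (hindep : iIndepFun (fun t ω => (α t ω, ξ t ω)) P)
    (hpair : ∀ t, IndepFun (α t) (ξ t) P)
    (hidα : ∀ t, IdentDistrib (α t) (α 1) P P)
    (hidξ : ∀ t, IdentDistrib (ξ t) (ξ 1) P P)
    -- 𝔼ξ = 0 and 𝔼ξξᵀ exists and is regular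
    (hξint : Integrable (ξ 1) P) (hξmean : ∫ ω, ξ 1 ω ∂P = 0)
    (hξsq : Integrable (fun ω => ‖ξ 1 ω‖ ^ 2) P)
    (hfullrank : (Matrix.of fun i j : Fin d => ∫ ω, ξ 1 ω i * ξ 1 ω j ∂P).det ≠ 0)
    -- the chain Z started at x
    (Z : EuclideanSpace ℝ (Fin d) → ℕ → Ω → EuclideanSpace ℝ (Fin d))
    (hZ0 : ∀ x ω, Z x 0 ω = x)
    (hZrec : ∀ x t ω, Z x (t + 1) ω = α (t + 1) ω • Z x t ω + β • ξ (t + 1) ω) :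
    ∀ γ R : ℝ, 0 < γ → γ < R →
      ∃ L : ℕ, 0 < L ∧ ∃ ε : ℝ, 0 < ε ∧
        ∀ x ∈ Metric.ball (0 : EuclideanSpace ℝ (Fin d)) R,
          ENNReal.ofReal ε ≤ P {ω | ∃ t ≤ L, ‖Z x t ω‖ ≤ γ} := by
  classical
  intro γ R hγ hγR
  set c : ℝ := (d : ℝ) / ((d : ℝ) + 1) with hc
  have hd1 : (1:ℝ) ≤ (d:ℝ) := by exact_mod_cast hd
  have hc0 : 0 < c := by rw [hc]; positivity
  have hc1 : c < 1 := by
    rw [hc, div_lt_one (by linarith)]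
    linarith
  have hcval : 1 - c = 1 / ((d:ℝ) + 1) := by
    rw [hc]
    field_simp
    ring
  -- Step 1: find θ < 1 with positive mass on [c, θ]
  have hθex : ∃ θ : ℝ, c ≤ θ ∧ θ < 1 ∧ 0 < P {ω | α 1 ω ∈ Set.Icc c θ} := by
    by_contra hcon
    push_neg at hcon
    have hnull : ∀ n : ℕ, P {ω | α 1 ω ∈ Set.Icc c (1 - (1 - c) / (n + 1))} = 0 := by
      intro n
      have h1 : (1 - c) / ((n:ℝ) + 1) > 0 := by
        apply div_pos (by linarith) (by positivity)
      have h2 : (1 - c) / ((n:ℝ) + 1) ≤ 1 - c := by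
        rw [div_le_iff₀ (by positivity)]
        nlinarith [Nat.cast_nonneg (α := ℝ) n]
      by_cases hcle : c ≤ 1 - (1 - c) / (n + 1)
      · have := hcon (1 - (1 - c) / (n + 1)) hcle (by linarith)
        exact le_antisymm this zero_le
      · have : Set.Icc c (1 - (1 - c) / ((n:ℝ) + 1)) = ∅ := Set.Icc_eq_empty hcle
        rw [this]
        simp
    have hsub : {ω | α 1 ω ∈ Set.Ico c 1} ⊆
        ⋃ n : ℕ, {ω | α 1 ω ∈ Set.Icc c (1 - (1 - c) / (n + 1))} := by
      intro ω hω
      obtain ⟨h1, h2⟩ := hω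
      obtain ⟨n, hn⟩ := exists_nat_gt ((1 - c) / (1 - α 1 ω))
      refine Set.mem_iUnion.mpr ⟨n, h1, ?_⟩
      have hpos : 0 < 1 - α 1 ω := by linarith
      rw [div_lt_iff₀ hpos] at hn
      have hnn : (1 - c) / ((n:ℝ) + 1) < 1 - α 1 ω := by
        rw [div_lt_iff₀ (by positivity)]
        nlinarith
      linarith
    have : P {ω | α 1 ω ∈ Set.Ico c 1} = 0 :=
      measure_mono_null hsub (measure_iUnion_null fun n => hnull n)
    rw [this] at hαIco
    exact lt_irrefl _ hαIco
  obtain ⟨θ, hθc, hθ1, hθpos⟩ := hθex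
  have hθ0 : 0 < θ := lt_of_lt_of_le hc0 hθc
  -- Step 2: support family from ξ
  set μ : Measure (EuclideanSpace ℝ (Fin d)) := P.map (ξ 1) with hμ
  have hμprob : IsProbabilityMeasure μ := Measure.isProbabilityMeasure_map (hξmeas 1).aemeasurable
  set Ssupp : Set (EuclideanSpace ℝ (Fin d)) :=
    {x | ∀ ρ : ℝ, 0 < ρ → 0 < μ (Metric.ball x ρ)} with hSsupp
  have hhull : (0 : EuclideanSpace ℝ (Fin d)) ∈ convexHull ℝ Ssupp := by
    apply aux_hull d hd
    intro v hv
    have hpos := aux_dir d P (ξ 1) (hξmeas 1) hξint hξmean hξsq hfullrank v hv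
    have hmeasset : MeasurableSet {x : EuclideanSpace ℝ (Fin d) | 0 < inner (𝕜 := ℝ) v x} := by
      have : Continuous fun x : EuclideanSpace ℝ (Fin d) => inner (𝕜 := ℝ) v x :=
        continuous_const.inner continuous_id
      exact (isOpen_lt continuous_const this).measurableSet
    have hμpos : 0 < μ {x | 0 < inner (𝕜 := ℝ) v x} := by
      rw [hμ, Measure.map_apply (hξmeas 1) hmeasset]
      exact hpos
    have hU0 : μ {x | ¬ ∀ ρ : ℝ, 0 < ρ → 0 < μ (Metric.ball x ρ)} = 0 := aux_null_nonsupport μ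
    have hdiff : 0 < μ ({x | 0 < inner (𝕜 := ℝ) v x} \
        {x | ¬ ∀ ρ : ℝ, 0 < ρ → 0 < μ (Metric.ball x ρ)}) := by
      rwa [measure_diff_null hU0]
    obtain ⟨z, hz1, hz2⟩ := nonempty_of_measure_ne_zero (ne_of_gt hdiff)
    refine ⟨z, ?_, hz1⟩
    rw [hSsupp]
    simp only [Set.mem_setOf_eq, not_forall, not_lt, nonpos_iff_eq_zero, not_exists] at hz2 ⊢
    intro ρ hρ
    exact pos_iff_ne_zero.mpr (by simpa using hz2 ρ hρ)
  obtain ⟨ι, hιfin, zfun, w, hrange, haff, hwpos, hwsum, hwcomb⟩ :=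
    eq_pos_convex_span_of_mem_convexHull hhull
  have hιne : Nonempty ι := by
    by_contra hne
    rw [not_nonempty_iff] at hne
    rw [Finset.univ_eq_empty, Finset.sum_empty] at hwsum
    norm_num at hwsum
  set m₀ : ℕ := Fintype.card ι with hm₀
  have hm₀pos : 0 < m₀ := Fintype.card_pos
  have hm₀le : m₀ ≤ d + 1 := by
    have h1 := haff.finrank_vectorSpan_add_one
    have h2 : Module.finrank ℝ (vectorSpan ℝ (Set.range zfun)) ≤ d := by
      have := Submodule.finrank_le (vectorSpan ℝ (Set.range zfun))
      rwa [finrank_euclideanSpace_fin] at this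
    omega
  set e := Fintype.equivFin ι with he
  set y : Fin m₀ → EuclideanSpace ℝ (Fin d) := fun i => zfun (e.symm i) with hy
  set lam : Fin m₀ → ℝ := fun i => w (e.symm i) with hlam
  have hlampos : ∀ i, 0 < lam i := fun i => hwpos _
  have hlamsum : ∑ i, lam i = 1 := by
    rw [hlam, ← hwsum]
    exact Fintype.sum_equiv e.symm _ _ fun i => rfl
  have hcomb : ∑ i, lam i • y i = 0 := by
    rw [hlam, hy, ← hwcomb]
    exact Fintype.sum_equiv e.symm _ _ fun i => rfl
  have hysupp : ∀ i, y i ∈ Ssupp := fun i => hrange ⟨e.symm i, rfl⟩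
  -- constants
  set Kb : ℝ := 1 + ∑ i, ‖y i‖ with hKb
  have hKb1 : 1 ≤ Kb := by
    rw [hKb]
    have : 0 ≤ ∑ i, ‖y i‖ := Finset.sum_nonneg fun i _ => norm_nonneg _
    linarith
  have hKby : ∀ i, ‖y i‖ ≤ Kb := by
    intro i
    rw [hKb]
    have h1 : ‖y i‖ ≤ ∑ j, ‖y j‖ :=
      Finset.single_le_sum (f := fun j => ‖y j‖) (fun j _ => norm_nonneg _) (Finset.mem_univ i)
    linarith
  set M : ℝ := β * Kb with hM
  have hM0 : 0 < M := by positivity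
  have hMy : ∀ i, ‖β • y i‖ ≤ M := by
    intro i
    rw [norm_smul, Real.norm_eq_abs, abs_of_pos hβ, hM]
    exact mul_le_mul_of_nonneg_left (hKby i) hβ.le
  have hθd : 0 < 1 - θ := by linarith
  set N : ℝ := R + M / (1 - θ) with hN
  have hN0 : 0 < N := by
    have : 0 < M / (1 - θ) := div_pos hM0 hθd
    have hR0 : 0 < R := lt_trans hγ hγR
    rw [hN]; linarith
  set η : ℝ := γ * (1 - θ) / (4 * (N + 1)) with hη
  have hη0 : 0 < η := by rw [hη]; positivity
  set η' : ℝ := γ * (1 - θ) / (4 * β) with hη'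
  have hη'0 : 0 < η' := by rw [hη']; positivity
  have hdev : (η * N + β * η') / (1 - θ) ≤ γ / 2 := by
    rw [div_le_iff₀ hθd]
    have h1 : η * N ≤ γ * (1 - θ) / 4 := by
      rw [hη]
      rw [div_mul_eq_mul_div, div_le_div_iff₀ (by positivity) (by norm_num)]
      nlinarith [mul_nonneg hγ.le hθd.le]
    have h2 : β * η' = γ * (1 - θ) / 4 := by
      rw [hη']
      field_simp
    linarith
  -- pigeonhole for u
  have hukex : ∃ k : ℕ, 0 < P {ω | α 1 ω ∈
      Set.Icc c θ ∩ Set.Icc (c * (1 + η) ^ k) (c * (1 + η) ^ (k + 1))} := by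
    by_contra hcon
    push_neg at hcon
    have hsub : {ω | α 1 ω ∈ Set.Icc c θ} ⊆ ⋃ k : ℕ, {ω | α 1 ω ∈
        Set.Icc c θ ∩ Set.Icc (c * (1 + η) ^ k) (c * (1 + η) ^ (k + 1))} := by
      intro ω hω
      obtain ⟨h1, h2⟩ := hω
      set x := α 1 ω with hx
      have hex : ∃ n : ℕ, x < c * (1 + η) ^ (n + 1) := by
        obtain ⟨n, hn⟩ := pow_unbounded_of_one_lt (x / c) (show (1:ℝ) < 1 + η by linarith)
        refine ⟨n, ?_⟩
        rw [div_lt_iff₀ hc0] at hn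
        have hle : c * (1 + η) ^ n ≤ c * (1 + η) ^ (n + 1) := by
          apply mul_le_mul_of_nonneg_left _ hc0.le
          apply pow_le_pow_right₀ (by linarith) (by omega)
        nlinarith
      set k₀ := Nat.find hex with hk₀
      have hup : x < c * (1 + η) ^ (k₀ + 1) := Nat.find_spec hex
      have hlow : c * (1 + η) ^ k₀ ≤ x := by
        rcases Nat.eq_zero_or_pos k₀ with h0 | hpos
        · rw [h0, pow_zero, mul_one]; exact h1
        · have := Nat.find_min hex (m := k₀ - 1) (by omega)
          push_neg at this
          have heq : k₀ - 1 + 1 = k₀ := by omega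
          rwa [heq] at this
      exact Set.mem_iUnion.mpr ⟨k₀, ⟨⟨h1, h2⟩, hlow, hup.le⟩⟩
    have : P {ω | α 1 ω ∈ Set.Icc c θ} = 0 :=
      measure_mono_null hsub (measure_iUnion_null fun n =>
        le_antisymm (hcon n) zero_le)
    rw [this] at hθpos
    exact lt_irrefl _ hθpos
  obtain ⟨k, hkpos⟩ := hukex
  set Aset : Set ℝ := Set.Icc c θ ∩ Set.Icc (c * (1 + η) ^ k) (c * (1 + η) ^ (k + 1)) with hAset
  set u : ℝ := c * (1 + η) ^ k with hu
  have hu0 : 0 < u := by rw [hu]; positivity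
  have hcu : c ≤ u := by
    rw [hu]
    nlinarith [one_le_pow₀ (show (1:ℝ) ≤ 1 + η by linarith) (n := k)]
  have hAprop : ∀ a ∈ Aset, u ≤ a ∧ a ≤ θ ∧ a - u ≤ η ∧ 0 < a := by
    intro a ha
    obtain ⟨⟨hac, haθ⟩, hau, hau'⟩ := ha
    refine ⟨hau, haθ, ?_, lt_of_lt_of_le hc0 hac⟩
    have h1 : a ≤ u * (1 + η) := by
      rw [hu]
      calc a ≤ c * (1 + η) ^ (k + 1) := hau'
        _ = c * (1 + η) ^ k * (1 + η) := by ring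
    have hu1' : u ≤ 1 := by
      obtain ⟨ω₀, hω₀⟩ := nonempty_of_measure_ne_zero (ne_of_gt hkpos)
      have := hω₀.2.1
      have h2 := hω₀.1.2
      have : u ≤ θ := le_trans this h2
      linarith
    nlinarith
  have huθ : u ≤ θ := by
    obtain ⟨ω₀, hω₀⟩ := nonempty_of_measure_ne_zero (ne_of_gt hkpos)
    exact le_trans hω₀.2.1 hω₀.1.2
  have hu1 : u < 1 := lt_of_le_of_lt huθ hθ1
  have hum : (1 - u) * (m₀ : ℝ) ≤ 1 := by
    have h1 : 1 - u ≤ 1 - c := by linarith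
    have h2 : (m₀ : ℝ) ≤ (d : ℝ) + 1 := by exact_mod_cast hm₀le
    have h3 : (1 - c) * ((d:ℝ) + 1) = 1 := by
      rw [hcval]
      field_simp
    have hm₀0 : (0:ℝ) ≤ m₀ := Nat.cast_nonneg _
    nlinarith
  -- choose T
  set B : ℝ := R + (m₀ : ℝ) ^ 2 * M with hB
  have hB0 : 0 < B := by
    have hR0 : 0 < R := lt_trans hγ hγR
    rw [hB]
    positivity
  obtain ⟨T₀, hT₀⟩ := exists_pow_lt_of_lt_one (show 0 < γ / 2 / B by positivity) hθ1
  set T : ℕ := max T₀ 1 with hT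
  have hT1 : 1 ≤ T := le_max_right _ _
  have hTbound : θ ^ T * B < γ / 2 := by
    have h1 : θ ^ T ≤ θ ^ T₀ := pow_le_pow_of_le_one hθ0.le hθ1.le (le_max_left _ _)
    have h2 : θ ^ T₀ < γ / 2 / B := hT₀
    rw [lt_div_iff₀ hB0] at h2
    nlinarith [pow_nonneg hθ0.le T]
  -- greedy assignment
  obtain ⟨g, hg⟩ := aux_greedy m₀ T hm₀pos u hu0 hu1 hum lam (fun i => (hlampos i).le) hlamsum
  -- the event
  set Bset : ℕ → Set (EuclideanSpace ℝ (Fin d)) :=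
    fun t => Metric.ball (y (g (T - t))) η' with hBset
  set C : ℕ → Set Ω := fun t => α t ⁻¹' Aset ∩ ξ t ⁻¹' Bset t with hC
  have hAmeas : MeasurableSet Aset := measurableSet_Icc.inter measurableSet_Icc
  have hBmeas : ∀ t, MeasurableSet (Bset t) := fun t => Metric.isOpen_ball.measurableSet
  have hprodset : ∀ t : ℕ, (fun ω => (α t ω, ξ t ω)) ⁻¹' (Aset ×ˢ Bset t) = C t := by
    intro t
    ext ω
    simp [hC, Set.mem_prod]
  have hPE : P (⋂ t ∈ Finset.Icc 1 T, C t) = ∏ t ∈ Finset.Icc 1 T, P (C t) := by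
    have := hindep.measure_inter_preimage_eq_mul (Finset.Icc 1 T)
      (sets := fun t => Aset ×ˢ Bset t) (fun t _ => hAmeas.prod (hBmeas t))
    simp_rw [hprodset] at this
    exact this
  have hfac : ∀ t, P (C t) = P {ω | α 1 ω ∈ Aset} * μ (Metric.ball (y (g (T - t))) η') := by
    intro t
    rw [hC]
    simp only []
    rw [(hpair t).measure_inter_preimage_eq_mul Aset (Bset t) hAmeas (hBmeas t)]
    congr 1
    · exact (hidα t).measure_mem_eq hAmeas
    · rw [(hidξ t).measure_mem_eq (hBmeas t), hμ, Measure.map_apply (hξmeas 1) (hBmeas t)]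
  have hCpos : ∀ t, 0 < P (C t) := by
    intro t
    rw [hfac t]
    have h1 : 0 < μ (Metric.ball (y (g (T - t))) η') := hysupp (g (T - t)) η' hη'0
    exact ENNReal.mul_pos (ne_of_gt hkpos) (ne_of_gt h1)
  set Q : ℝ≥0∞ := ∏ t ∈ Finset.Icc 1 T, P (C t) with hQ
  have hQpos : 0 < Q := CanonicallyOrderedAdd.prod_pos.mpr fun t _ => hCpos t
  have hQtop : Q ≠ ⊤ := by
    rw [hQ]
    exact (ENNReal.prod_lt_top fun t _ => measure_lt_top P _).ne
  refine ⟨T, by omega, Q.toReal, ENNReal.toReal_pos (ne_of_gt hQpos) hQtop, ?_⟩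
  intro x hx
  rw [ENNReal.ofReal_toReal hQtop]
  have hsubfinal : (⋂ t ∈ Finset.Icc 1 T, C t) ⊆ {ω | ∃ t ≤ T, ‖Z x t ω‖ ≤ γ} := by
    intro ω hω
    have hxR : ‖x‖ < R := by rwa [mem_ball_zero_iff] at hx
    have hωt : ∀ t, 1 ≤ t → t ≤ T → α t ω ∈ Aset ∧ ξ t ω ∈ Bset t := by
      intro t h1 h2
      have := Set.mem_iInter₂.mp hω t (Finset.mem_Icc.mpr ⟨h1, h2⟩)
      exact this
    refine ⟨T, le_rfl, ?_⟩
    -- nominal sequence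
    set W : ℕ → EuclideanSpace ℝ (Fin d) := fun n =>
      Nat.rec x (fun t Wt => u • Wt + β • y (g (T - (t + 1)))) n with hW
    have hW0 : W 0 = x := rfl
    have hWs : ∀ t, W (t + 1) = u • W t + β • y (g (T - (t + 1))) := fun t => rfl
    -- (D1) uniform bound on the nominal sequence
    have hWbound : ∀ t, ‖W t‖ ≤ N := by
      intro t
      induction t with
      | zero =>
        rw [hW0]
        have : 0 < M / (1 - θ) := div_pos hM0 hθd
        rw [hN]
        linarith
      | succ t ih =>
        rw [hWs]
        have h1 : ‖u • W t + β • y (g (T - (t + 1)))‖ ≤ u * ‖W t‖ + M := by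
          calc ‖u • W t + β • y (g (T - (t + 1)))‖ ≤ ‖u • W t‖ + ‖β • y (g (T - (t + 1)))‖ :=
                norm_add_le _ _
            _ ≤ u * ‖W t‖ + M := by
                rw [norm_smul, Real.norm_eq_abs, abs_of_pos hu0]
                exact add_le_add le_rfl (hMy _)
        have h2 : u * ‖W t‖ ≤ θ * N :=
          mul_le_mul huθ ih (norm_nonneg _) hθ0.le
        have h3 : θ * N + M ≤ N := by
          rw [hN]
          have hR0 : 0 < R := lt_trans hγ hγR
          have : M / (1 - θ) * (1 - θ) = M := div_mul_cancel₀ M (ne_of_gt hθd)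
          nlinarith
        linarith
    -- (D2) deviation bound
    set ed : ℝ := η * N + β * η' with hed
    have hed0 : 0 < ed := by rw [hed]; positivity
    have hdevb : ∀ t, t ≤ T → ‖Z x t ω - W t‖ ≤ ed / (1 - θ) := by
      intro t
      induction t with
      | zero =>
        intro _
        rw [hZ0, hW0, sub_self, norm_zero]
        positivity
      | succ t ih =>
        intro ht
        have ht' : t ≤ T := by omega
        have ihb := ih ht'
        obtain ⟨hαmem, hξmem⟩ := hωt (t + 1) (by omega) ht
        obtain ⟨hau, haθ, haη, ha0⟩ := hAprop _ hαmem
        have hξn : ‖ξ (t + 1) ω - y (g (T - (t + 1)))‖ ≤ η' := by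
          have := hξmem
          rw [hBset] at this
          simp only [Metric.mem_ball, dist_eq_norm] at this
          exact this.le
        have heq : Z x (t + 1) ω - W (t + 1) =
            α (t + 1) ω • (Z x t ω - W t) + (α (t + 1) ω - u) • W t
              + β • (ξ (t + 1) ω - y (g (T - (t + 1)))) := by
          rw [hZrec, hWs]
          module
        have hn : ‖Z x (t + 1) ω - W (t + 1)‖ ≤
            θ * (ed / (1 - θ)) + η * N + β * η' := by
          rw [heq]
          have t1 : ‖α (t + 1) ω • (Z x t ω - W t)‖ ≤ θ * (ed / (1 - θ)) := by
            rw [norm_smul, Real.norm_eq_abs, abs_of_pos ha0]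
            exact mul_le_mul haθ ihb (norm_nonneg _) hθ0.le
          have t2 : ‖(α (t + 1) ω - u) • W t‖ ≤ η * N := by
            rw [norm_smul, Real.norm_eq_abs, abs_of_nonneg (by linarith)]
            exact mul_le_mul haη (hWbound t) (norm_nonneg _) hη0.le
          have t3 : ‖β • (ξ (t + 1) ω - y (g (T - (t + 1))))‖ ≤ β * η' := by
            rw [norm_smul, Real.norm_eq_abs, abs_of_pos hβ]
            exact mul_le_mul_of_nonneg_left hξn hβ.le
          calc ‖_ + _ + _‖ ≤ ‖α (t + 1) ω • (Z x t ω - W t) + (α (t + 1) ω - u) • W t‖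
              + ‖β • (ξ (t + 1) ω - y (g (T - (t + 1))))‖ := norm_add_le _ _
            _ ≤ ‖α (t + 1) ω • (Z x t ω - W t)‖ + ‖(α (t + 1) ω - u) • W t‖
              + ‖β • (ξ (t + 1) ω - y (g (T - (t + 1))))‖ := by
                have := norm_add_le (α (t + 1) ω • (Z x t ω - W t)) ((α (t + 1) ω - u) • W t)
                linarith
            _ ≤ θ * (ed / (1 - θ)) + η * N + β * η' := add_le_add (add_le_add t1 t2) t3
        have hcanc : θ * (ed / (1 - θ)) + η * N + β * η' = ed / (1 - θ) := by
          rw [hed]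
          field_simp
          ring
        rw [hcanc] at hn
        exact hn
    -- (D3) closed form for W
    have hWclosed : ∀ t, t ≤ T → W t = u ^ t • x
        + ∑ j ∈ Finset.range t, u ^ j • (β • y (g (T - t + j))) := by
      intro t
      induction t with
      | zero => intro _; simp [hW0]
      | succ t ih =>
        intro ht
        have ht' : t ≤ T := by omega
        rw [hWs, ih ht']
        rw [Finset.sum_range_succ' (fun j => u ^ j • (β • y (g (T - (t + 1) + j))))]
        have hidx : ∀ j, T - (t + 1) + (j + 1) = T - t + j := by
          intro j
          omega
        have hsum : ∑ j ∈ Finset.range t, u ^ (j + 1) • (β • y (g (T - (t + 1) + (j + 1))))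
            = ∑ j ∈ Finset.range t, u • (u ^ j • (β • y (g (T - t + j)))) := by
          apply Finset.sum_congr rfl
          intro j _
          rw [hidx j, pow_succ, mul_comm, mul_smul]
        rw [smul_add, Finset.smul_sum, ← hsum]
        rw [smul_smul, ← pow_succ']
        simp only [pow_zero, one_smul]
        abel
    -- (D4) final nominal bound
    have hWfinal : ‖W T‖ ≤ u ^ T * R + (m₀ : ℝ) ^ 2 * u ^ T * M := by
      have hcf := hWclosed T le_rfl
      have hidx0 : ∀ j, T - T + j = j := fun j => by omega
      simp only [hidx0] at hcf
      set V : EuclideanSpace ℝ (Fin d) := ∑ j ∈ Finset.range T, u ^ j • (β • y (g j)) with hV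
      have hterm : ∀ j, u ^ j • (β • y (g j)) =
          ∑ i, (if g j = i then u ^ j else 0) • (β • y i) := by
        intro j
        rw [Finset.sum_eq_single (g j)]
        · rw [if_pos rfl]
        · intro i _ hne
          rw [if_neg (fun h => hne h.symm), zero_smul]
        · intro h; exact absurd (Finset.mem_univ _) h
      have hVsum : V = ∑ i, (∑ j ∈ Finset.range T, if g j = i then u ^ j else 0) • (β • y i) := by
        rw [hV]
        rw [Finset.sum_congr rfl fun j _ => hterm j]
        rw [Finset.sum_comm]
        apply Finset.sum_congr rfl
        intro i _
        rw [Finset.sum_smul]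
      set S0 : ℝ := ∑ j ∈ Finset.range T, u ^ j with hS0
      have hzero : ∑ i, (lam i * S0) • (β • y i) = 0 := by
        have : ∀ i, (lam i * S0) • (β • y i) = (S0 * β) • (lam i • y i) := by
          intro i
          rw [smul_smul, smul_smul]
          ring_nf
        rw [Finset.sum_congr rfl fun i _ => this i, ← Finset.smul_sum, hcomb, smul_zero]
      have hVsplit : V = ∑ i, ((∑ j ∈ Finset.range T, if g j = i then u ^ j else 0)
          - lam i * S0) • (β • y i) := by
        rw [hVsum]
        rw [← sub_zero (∑ i, (∑ j ∈ Finset.range T, if g j = i then u ^ j else 0) • (β • y i))]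
        rw [← hzero, ← Finset.sum_sub_distrib]
        apply Finset.sum_congr rfl
        intro i _
        rw [← sub_smul]
      have hVnorm : ‖V‖ ≤ (m₀ : ℝ) ^ 2 * u ^ T * M := by
        rw [hVsplit]
        calc ‖∑ i, ((∑ j ∈ Finset.range T, if g j = i then u ^ j else 0)
              - lam i * S0) • (β • y i)‖
            ≤ ∑ i, ‖((∑ j ∈ Finset.range T, if g j = i then u ^ j else 0)
              - lam i * S0) • (β • y i)‖ := norm_sum_le _ _
          _ ≤ ∑ _i : Fin m₀, ((m₀ : ℝ) * u ^ T) * M := by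
              apply Finset.sum_le_sum
              intro i _
              rw [norm_smul, Real.norm_eq_abs]
              have h1 := hg i
              have h2 := hMy i
              have habs : |(∑ j ∈ Finset.range T, if g j = i then u ^ j else 0)
                  - lam i * S0| ≤ (m₀ : ℝ) * u ^ T := h1
              exact mul_le_mul habs h2 (norm_nonneg _)
                (by positivity)
          _ = (m₀ : ℝ) ^ 2 * u ^ T * M := by
              rw [Finset.sum_const, Finset.card_univ, Fintype.card_fin, nsmul_eq_mul]
              ring
      rw [hcf]
      calc ‖u ^ T • x + V‖ ≤ ‖u ^ T • x‖ + ‖V‖ := norm_add_le _ _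
        _ ≤ u ^ T * R + (m₀ : ℝ) ^ 2 * u ^ T * M := by
            rw [norm_smul, Real.norm_eq_abs, abs_of_pos (pow_pos hu0 T)]
            have := mul_le_mul_of_nonneg_left hxR.le (pow_pos hu0 T).le
            have h2 := mul_lt_mul_of_pos_left hxR (pow_pos hu0 T)
            linarith [hVnorm]
    -- combine
    have hfinal : ‖Z x T ω‖ ≤ γ := by
      have h1 : ‖Z x T ω‖ ≤ ‖Z x T ω - W T‖ + ‖W T‖ := by
        calc ‖Z x T ω‖ = ‖Z x T ω - W T + W T‖ := by rw [sub_add_cancel]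
          _ ≤ ‖Z x T ω - W T‖ + ‖W T‖ := norm_add_le _ _
      have h2 := hdevb T le_rfl
      have h3 : ed / (1 - θ) ≤ γ / 2 := hdev
      have h4 : u ^ T * R + (m₀ : ℝ) ^ 2 * u ^ T * M ≤ θ ^ T * B := by
        rw [hB]
        have h5 : u ^ T ≤ θ ^ T := pow_le_pow_left₀ hu0.le huθ T
        have hR0 : 0 < R := lt_trans hγ hγR
        have h6 : (0:ℝ) ≤ (m₀ : ℝ) ^ 2 * M := by positivity
        nlinarith [pow_pos hu0 T, pow_pos hθ0 T]
      have h5 : ‖Z x T ω - W T‖ + ‖W T‖ ≤ γ / 2 + θ ^ T * B :=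
        add_le_add (le_trans h2 h3) (le_trans hWfinal h4)
      have h6 : γ / 2 + θ ^ T * B ≤ γ / 2 + γ / 2 := by linarith [hTbound]
      calc ‖Z x T ω‖ ≤ ‖Z x T ω - W T‖ + ‖W T‖ := h1
        _ ≤ γ / 2 + θ ^ T * B := h5
        _ ≤ γ / 2 + γ / 2 := h6
        _ = γ := by ring
    exact hfinal
  calc Q = P (⋂ t ∈ Finset.Icc 1 T, C t) := hPE.symm
    _ ≤ P {ω | ∃ t ≤ T, ‖Z x t ω‖ ≤ γ} := measure_mono hsubfinal


end
end
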